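/- arXiv:2601.08546 — 7 statements merged into one kernel-verified Lean document; each statement's English description precedes it below -/
import Mathlib

section
/- Let Ω be a finite set with |Ω| = n, let F be a field, and let 𝓔 be a finite collection of subsets of Ω that contains a partition of Ω (i.e., there is a subfamily of 𝓔 whose members are pairwise disjoint, nonempty, and have union Ω). Let Γ be a tree on the vertex set Ω. Then the incidence matrix I(𝓔) has rank n over F if and only if the difference matrix I(𝓔)^Γ has rank n − 1 over F. -/
/-- The incidence matrix of a finite collection `E` of subsets of `Ω` over a field `F`:
rows are indexed by `Ω`, columns by the members of `E`, with entry `1` if the row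
element belongs to the column subset and `0` otherwise. -/
noncomputable def incidenceMatrix (F : Type*) [Field F] {Ω : Type*} [Fintype Ω]
    [DecidableEq Ω] (E : Finset (Finset Ω)) : Matrix Ω {B // B ∈ E} F :=
  fun ω B => if ω ∈ B.1 then 1 else 0

/-- The difference matrix `I(E)^Γ` of a simple graph `Γ` on `Ω`: rows are indexed by the
edges `{ω_i, ω_j}` of `Γ` with `ω_i < ω_j`, columns by the members of `E`, with entry
`I(E)_{ω_i,B} - I(E)_{ω_j,B}`. -/
noncomputable def diffMatrix (F : Type*) [Field F] {Ω : Type*} [Fintype Ω]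
    [LinearOrder Ω] (Γ : SimpleGraph Ω) (E : Finset (Finset Ω)) :
    Matrix {p : Ω × Ω // p.1 < p.2 ∧ Γ.Adj p.1 p.2} {B // B ∈ E} F :=
  fun e B => (if e.1.1 ∈ B.1 then (1 : F) else 0) - (if e.1.2 ∈ B.1 then (1 : F) else 0)

/-- `E` contains a partition of `Ω`: a subfamily whose members are pairwise disjoint,
nonempty, and have union `Ω`. -/
def containsPartition {Ω : Type*} [Fintype Ω] [DecidableEq Ω]
    (E : Finset (Finset Ω)) : Prop :=
  ∃ P : Finset (Finset Ω), P ⊆ E ∧ (∀ B ∈ P, B.Nonempty) ∧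
    (∀ B ∈ P, ∀ C ∈ P, B ≠ C → Disjoint B C) ∧ P.biUnion id = Finset.univ

open Submodule Module

theorem stmt0 (F : Type*) [Field F] {Ω : Type*} [Fintype Ω] [LinearOrder Ω]
    (n : ℕ) (hn : Fintype.card Ω = n)
    (E : Finset (Finset Ω)) (hE : containsPartition E)
    (Γ : SimpleGraph Ω) (hΓ : Γ.IsTree) :
    (incidenceMatrix F E).rank = n ↔ (diffMatrix F Γ E).rank = n - 1 := by
  classical
  haveI : Nonempty Ω := hΓ.isConnected.nonempty
  obtain ⟨P, hPE, _hPne, hPdisj, hPuniv⟩ := hE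
  set r : Ω → ({B // B ∈ E} → F) := fun ω B => if ω ∈ B.1 then (1 : F) else 0 with hr
  set W : Submodule F ({B // B ∈ E} → F) :=
    Submodule.span F (Set.range (diffMatrix F Γ E)) with hWdef
  have hrow : ∀ e : {p : Ω × Ω // p.1 < p.2 ∧ Γ.Adj p.1 p.2},
      diffMatrix F Γ E e = r e.1.1 - r e.1.2 := by
    intro e; funext B; simp [diffMatrix, hr]
  have hadj : ∀ u v, Γ.Adj u v → r u - r v ∈ W := by
    intro u v huv
    rcases lt_trichotomy u v with h | h | h
    · have hm : diffMatrix F Γ E ⟨(u, v), h, huv⟩ ∈ W :=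
        Submodule.subset_span ⟨_, rfl⟩
      rwa [hrow] at hm
    · exact absurd h huv.ne
    · have hm : diffMatrix F Γ E ⟨(v, u), h, huv.symm⟩ ∈ W :=
        Submodule.subset_span ⟨_, rfl⟩
      rw [hrow] at hm
      have := W.neg_mem hm
      simpa using this
  have hdiff : ∀ u v, r u - r v ∈ W := by
    intro u v
    obtain ⟨p⟩ := hΓ.isConnected.preconnected u v
    induction p with
    | nil => simp [W.zero_mem]
    | cons h p ih =>
        have := W.add_mem (hadj _ _ h) ih
        simpa using this
  -- the linear functional summing coordinates over the partition
  let φ : ({B // B ∈ E} → F) →ₗ[F] F :=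
    ∑ B ∈ Finset.univ.filter (fun B : {B // B ∈ E} => B.1 ∈ P), LinearMap.proj B
  have hφ : ∀ x, φ x = ∑ B ∈ Finset.univ.filter (fun B : {B // B ∈ E} => B.1 ∈ P), x B := by
    intro x; simp [φ]
  have hφr : ∀ ω, φ (r ω) = 1 := by
    intro ω
    have hω : ω ∈ P.biUnion id := by rw [hPuniv]; exact Finset.mem_univ ω
    obtain ⟨B₀, hB₀P, hωB₀⟩ := Finset.mem_biUnion.mp hω
    rw [hφ, Finset.sum_filter]
    simp only [hr]
    rw [Finset.univ_eq_attach,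
      Finset.sum_attach E (fun B => if B ∈ P then (if ω ∈ B then (1 : F) else 0) else 0)]
    rw [Finset.sum_ite_mem, Finset.inter_eq_right.mpr hPE]
    rw [Finset.sum_eq_single_of_mem B₀ hB₀P]
    · exact if_pos hωB₀
    · intro B hBP hne
      have hd : Disjoint B B₀ := hPdisj B hBP B₀ hB₀P hne
      have : ω ∉ B := fun hωB => (Finset.disjoint_left.mp hd hωB) hωB₀
      exact if_neg this
  have hWker : W ≤ LinearMap.ker φ := by
    rw [hWdef, Submodule.span_le]
    rintro _ ⟨e, rfl⟩
    rw [SetLike.mem_coe, LinearMap.mem_ker, hrow, map_sub, hφr, hφr, sub_self]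
  set ω₀ : Ω := Classical.arbitrary Ω
  have hr₀ : r ω₀ ∉ W := by
    intro h
    have : φ (r ω₀) = 0 := hWker h
    rw [hφr] at this
    exact one_ne_zero this
  have hr₀ne : r ω₀ ≠ 0 := by
    intro h
    apply one_ne_zero (α := F)
    rw [← hφr ω₀, h, map_zero]
  -- row space of incidence matrix
  have hVW : Submodule.span F (Set.range (incidenceMatrix F E)) = W ⊔ (F ∙ r ω₀) := by
    apply le_antisymm
    · rw [Submodule.span_le]
      rintro _ ⟨ω, rfl⟩
      have h1 : r ω - r ω₀ ∈ W ⊔ (F ∙ r ω₀) := Submodule.mem_sup_left (hdiff ω ω₀)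
      have h2 : r ω₀ ∈ W ⊔ (F ∙ r ω₀) :=
        Submodule.mem_sup_right (Submodule.mem_span_singleton_self _)
      have : incidenceMatrix F E ω = (r ω - r ω₀) + r ω₀ := by
        funext B; simp [incidenceMatrix, hr]
      rw [this]
      exact Submodule.add_mem _ h1 h2
    · apply sup_le
      · rw [hWdef, Submodule.span_le]
        rintro _ ⟨e, rfl⟩
        rw [hrow]
        have h1 : r e.1.1 ∈ Submodule.span F (Set.range (incidenceMatrix F E)) :=
          Submodule.subset_span ⟨e.1.1, rfl⟩
        have h2 : r e.1.2 ∈ Submodule.span F (Set.range (incidenceMatrix F E)) :=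
          Submodule.subset_span ⟨e.1.2, rfl⟩
        exact Submodule.sub_mem _ h1 h2
      · rw [Submodule.span_le]
        rintro _ rfl
        exact Submodule.subset_span ⟨ω₀, rfl⟩
  have hinf : W ⊓ (F ∙ r ω₀) = ⊥ := by
    rw [eq_bot_iff]
    rintro x ⟨hxW, hxs⟩
    obtain ⟨c, rfl⟩ := Submodule.mem_span_singleton.mp hxs
    rcases eq_or_ne c 0 with rfl | hc
    · simp
    · exfalso
      apply hr₀
      have := W.smul_mem c⁻¹ hxW
      rwa [smul_smul, inv_mul_cancel₀ hc, one_smul] at this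
  have hdim : finrank F ↥(W ⊔ (F ∙ r ω₀)) = finrank F W + 1 := by
    have := Submodule.finrank_sup_add_finrank_inf_eq W (F ∙ r ω₀)
    rw [hinf, finrank_bot, finrank_span_singleton hr₀ne, add_zero] at this
    exact this
  have hrankM : (incidenceMatrix F E).rank = finrank F W + 1 := by
    rw [Matrix.rank_eq_finrank_span_row]
    change finrank F ↥(Submodule.span F (Set.range (incidenceMatrix F E))) = _
    rw [hVW, hdim]
  have hrankD : (diffMatrix F Γ E).rank = finrank F W := by
    rw [Matrix.rank_eq_finrank_span_row, hWdef]
    rfl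
  have hn1 : 1 ≤ n := by
    rw [← hn]; exact Fintype.card_pos
  rw [hrankM, hrankD]
  omega
end

section
/- Let (M, Ω) be a finite transformation monoid with |Ω| = n > 1 and let F be a field. Assume: (a) the minimal ideal I(M) of M contains a constant map; (b) M \ I(M) has a unique minimal 𝒥-class J (with respect to the 𝒥-order), and J is regular; (c) every element of J has rank 2 (i.e., its image has exactly 2 elements). Let E(J) be the set of idempotents of J, let 𝓔 = { f⁻¹(fω) : f ∈ E(J), ω ∈ Ω }, and let Γ(M) be the simple graph on vertex set Ω whose edges are the pairs {α, β} with α ≠ β such that eα = α and eβ = β for some e ∈ E(J). Then the augmentation submodule Aug(FΩ) is a simple module over the monoid algebra FM if and only if the difference matrix I(𝓔)^{Γ(M)} has rank n − 1 over F. -/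
open scoped Classical

/-- The principal two-sided ideal `MaM` generated by `a` in the monoid `M`. -/
def jIdeal {M : Type*} [Monoid M] (a : M) : Set M := {x | ∃ u v : M, x = u * a * v}

/-- The minimal (two-sided) ideal of a finite monoid `M`: the set of elements that lie
in every principal two-sided ideal. -/
def minIdeal (M : Type*) [Monoid M] : Set M := {a | ∀ b : M, a ∈ jIdeal b}

/-- The set of idempotents lying in a subset `J` of a monoid. -/
def idempotentsIn {M : Type*} [Monoid M] (J : Set M) : Set M := {f | f ∈ J ∧ f * f = f}

/-- The set system `𝓔 = { f⁻¹(fω) : f ∈ E(J), ω ∈ Ω }` attached to a set `J` of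
elements of a transformation monoid `M ≤ T_Ω`. -/
noncomputable def setSystem {Ω : Type*} [Fintype Ω] [DecidableEq Ω]
    (M : Submonoid (Function.End Ω)) (J : Set ↥M) : Finset (Finset Ω) :=
  Finset.univ.filter (fun B : Finset Ω =>
    ∃ f ∈ idempotentsIn J, ∃ ω : Ω,
      B = Finset.univ.filter (fun x =>
        (f : Function.End Ω) x = (f : Function.End Ω) ω))

/-- The graph `Γ(M)` on `Ω`: `α` and `β` are adjacent iff `α ≠ β` and some idempotent
`e ∈ E(J)` fixes both `α` and `β`. -/
def gammaGraph {Ω : Type*} (M : Submonoid (Function.End Ω)) (J : Set ↥M) :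
    SimpleGraph Ω :=
  SimpleGraph.fromRel (fun α β =>
    ∃ e ∈ idempotentsIn J, (e : Function.End Ω) α = α ∧ (e : Function.End Ω) β = β)

/-- The linear extension to `FΩ = Ω → F` of the action of a self-map `m` of `Ω`:
on basis vectors it sends `ω` to `m ω`. -/
noncomputable def act (F : Type*) [Field F] {Ω : Type*} [Fintype Ω] [DecidableEq Ω]
    (m : Ω → Ω) (v : Ω → F) : Ω → F :=
  fun α => ∑ ω ∈ Finset.univ.filter (fun ω => m ω = α), v ω

/-- The augmentation submodule of the transformation module `FΩ = Ω → F`: the kernel of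
the augmentation map sending each basis element to `1`, i.e. vectors whose coordinates
sum to zero. -/
noncomputable def augSubmodule (F : Type*) [Field F] (Ω : Type*) [Fintype Ω] :
    Submodule F (Ω → F) :=
  LinearMap.ker (∑ ω : Ω, (LinearMap.proj ω : (Ω → F) →ₗ[F] F))

open Finset Module

section AuxLemmas

variable (F : Type*) [Field F] {Ω : Type*} [Fintype Ω] [LinearOrder Ω]

/-- Kronecker delta basis vector. -/
noncomputable def dd (α : Ω) : Ω → F := fun x => if x = α then 1 else 0

lemma mem_aug {v : Ω → F} : v ∈ augSubmodule F Ω ↔ ∑ ω, v ω = 0 := by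
  simp [augSubmodule, LinearMap.mem_ker, LinearMap.sum_apply]

lemma dd_sub_mem_aug {α β : Ω} (h : α ≠ β) : dd F α - dd F β ∈ augSubmodule F Ω := by
  rw [mem_aug]
  simp [dd, Finset.sum_sub_distrib, Finset.sum_ite_eq]

lemma dd_sub_ne_zero {α β : Ω} (h : α ≠ β) : dd F α - dd F β ≠ (0 : Ω → F) := by
  intro hc
  have := congrFun hc α
  simp [dd, h, if_neg h.symm] at this

/-- `act` as a linear map. -/
noncomputable def actL (m : Ω → Ω) : (Ω → F) →ₗ[F] (Ω → F) where
  toFun := act F m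
  map_add' v w := by funext α; simp [act, Finset.sum_add_distrib]
  map_smul' c v := by funext α; simp [act, Finset.mul_sum]

lemma actL_apply (m : Ω → Ω) (v : Ω → F) : actL F m v = act F m v := rfl

lemma act_comp (m m' : Ω → Ω) (v : Ω → F) :
    act F (fun x => m (m' x)) v = act F m (act F m' v) := by
  funext α
  simp only [act, Finset.sum_filter]
  have h1 : ∀ a : Ω, (if m a = α then ∑ b : Ω, if m' b = a then v b else 0 else 0)
      = ∑ b : Ω, if m' b = a then (if m a = α then v b else 0) else 0 := by
    intro a; split <;> simp
  simp only [h1]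
  rw [Finset.sum_comm]
  refine Finset.sum_congr rfl fun b _ => ?_
  rw [Finset.sum_ite_eq Finset.univ (m' b) (fun a => if m a = α then v b else 0)]
  simp

lemma sum_act (m : Ω → Ω) (v : Ω → F) : ∑ α, act F m v α = ∑ ω, v ω := by
  simp only [act]
  rw [Finset.sum_fiberwise]

lemma sum_act_filter (m : Ω → Ω) (v : Ω → F) (P : Ω → Prop) [DecidablePred P] :
    ∑ x ∈ Finset.univ.filter P, act F m v x
      = ∑ ω ∈ Finset.univ.filter (fun ω => P (m ω)), v ω := by
  simp only [act, Finset.sum_filter]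
  have h1 : ∀ a : Ω, (if P a then ∑ b : Ω, if m b = a then v b else 0 else 0)
      = ∑ b : Ω, if m b = a then (if P a then v b else 0) else 0 := by
    intro a; split <;> simp
  simp only [h1]
  rw [Finset.sum_comm]
  refine Finset.sum_congr rfl fun b _ => ?_
  rw [Finset.sum_ite_eq Finset.univ (m b) (fun a => if P a then v b else 0)]
  simp

lemma act_dd (m : Ω → Ω) (α : Ω) : act F m (dd F α) = dd F (m α) := by
  funext x
  simp only [act, dd]
  rw [Finset.sum_ite_eq' (Finset.univ.filter (fun ω => m ω = x)) α (fun _ => (1:F))]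
  simp [eq_comm]

lemma act_dd_sub (m : Ω → Ω) (α β : Ω) :
    act F m (dd F α - dd F β) = dd F (m α) - dd F (m β) := by
  rw [← actL_apply, map_sub, actL_apply, actL_apply, act_dd, act_dd]

lemma act_mem_aug (m : Ω → Ω) {v : Ω → F} (hv : v ∈ augSubmodule F Ω) :
    act F m v ∈ augSubmodule F Ω := by
  rw [mem_aug] at hv ⊢
  rw [sum_act, hv]

lemma idem_struct {e : Ω → Ω} (h2 : (Finset.univ.image e).card = 2)
    (hid : ∀ x, e (e x) = e x) :
    ∃ α β : Ω, α ≠ β ∧ e α = α ∧ e β = β ∧ (∀ x, e x = α ∨ e x = β) := by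
  obtain ⟨α, β, hne, him⟩ := Finset.card_eq_two.1 h2
  have hmem : ∀ x, e x = α ∨ e x = β := by
    intro x
    have : e x ∈ Finset.univ.image e := Finset.mem_image_of_mem e (Finset.mem_univ x)
    rw [him] at this
    simpa using this
  have hfix : ∀ γ, γ ∈ Finset.univ.image e → e γ = γ := by
    intro γ hγ
    obtain ⟨x, _, hx⟩ := Finset.mem_image.1 hγ
    rw [← hx, hid]
  exact ⟨α, β, hne, hfix α (him ▸ by simp), hfix β (him ▸ by simp), hmem⟩

lemma idem_cover {e : Ω → Ω} (h2 : (Finset.univ.image e).card = 2)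
    {γ δ : Ω} (hne : γ ≠ δ) (hγ : e γ = γ) (hδ : e δ = δ) :
    ∀ x, e x = γ ∨ e x = δ := by
  have hsub : ({γ, δ} : Finset Ω) ⊆ Finset.univ.image e := by
    intro x hx
    rcases Finset.mem_insert.1 hx with h | h
    · subst h; exact Finset.mem_image.2 ⟨x, Finset.mem_univ x, hγ⟩
    · rw [Finset.mem_singleton] at h; subst h
      exact Finset.mem_image.2 ⟨x, Finset.mem_univ x, hδ⟩
  have hcard : ({γ, δ} : Finset Ω).card = 2 := Finset.card_pair hne
  have heq : Finset.univ.image e = ({γ, δ} : Finset Ω) :=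
    (Finset.eq_of_subset_of_card_le hsub (by rw [hcard, h2])).symm
  intro x
  have : e x ∈ Finset.univ.image e := Finset.mem_image_of_mem e (Finset.mem_univ x)
  rw [heq] at this
  simpa using this

lemma filter_not_cover {e : Ω → Ω} {α β : Ω} (hne : α ≠ β)
    (hcov : ∀ x, e x = α ∨ e x = β) :
    (Finset.univ.filter (fun ω => ¬ e ω = α))
      = (Finset.univ.filter (fun ω => e ω = β)) := by
  apply Finset.filter_congr
  intro x _
  constructor
  · intro hx
    rcases hcov x with h | h
    · exact absurd h hx
    · simp [h]
  · intro hx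
    rw [hx]; exact fun hc => hne hc.symm

lemma act_idem {e : Ω → Ω} {α β : Ω} (hne : α ≠ β) (hα : e α = α) (hβ : e β = β)
    (hcov : ∀ x, e x = α ∨ e x = β) {v : Ω → F} (hv : v ∈ augSubmodule F Ω) :
    act F e v = (∑ ω ∈ Finset.univ.filter (fun ω => e ω = α), v ω) • (dd F α - dd F β) := by
  have hsum : (∑ ω ∈ Finset.univ.filter (fun ω => e ω = α), v ω)
      + (∑ ω ∈ Finset.univ.filter (fun ω => e ω = β), v ω) = 0 := by
    have h := (mem_aug F).1 hv
    rwa [← Finset.sum_filter_add_sum_filter_not Finset.univ (fun ω => e ω = α) v,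
      filter_not_cover hne hcov] at h
  funext x
  show (∑ ω ∈ Finset.univ.filter (fun ω => e ω = x), v ω) = _
  by_cases hxα : x = α
  · subst hxα
    simp [dd, hne, Pi.smul_apply, Pi.sub_apply]
  · by_cases hxβ : x = β
    · subst hxβ
      have : (∑ ω ∈ Finset.univ.filter (fun ω => e ω = x), v ω)
          = - ∑ ω ∈ Finset.univ.filter (fun ω => e ω = α), v ω :=
        eq_neg_of_add_eq_zero_right hsum
      rw [this]
      simp [dd, hne.symm, Pi.smul_apply, Pi.sub_apply]
    · have hempty : (Finset.univ.filter (fun ω => e ω = x)) = ∅ := by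
        apply Finset.filter_false_of_mem
        intro ω _
        rcases hcov ω with h | h <;> rw [h] <;>
          [exact fun hc => hxα hc.symm; exact fun hc => hxβ hc.symm]
      rw [hempty]
      simp [dd, hxα, hxβ, Pi.smul_apply, Pi.sub_apply]

/-- The linear map sending `v` to the vector of its sums over the members of `E`. -/
noncomputable def psiE (E : Finset (Finset Ω)) : (Ω → F) →ₗ[F] ({B // B ∈ E} → F) where
  toFun v B := ∑ ω ∈ B.1, v ω
  map_add' v w := by funext B; simp [Finset.sum_add_distrib]
  map_smul' c v := by funext B; simp [Finset.mul_sum]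

lemma psiE_dd (E : Finset (Finset Ω)) (α : Ω) (B : {B // B ∈ E}) :
    psiE F E (dd F α) B = if α ∈ B.1 then 1 else 0 := by
  simp only [psiE, LinearMap.coe_mk, AddHom.coe_mk, dd]
  exact Finset.sum_ite_eq' B.1 α (fun _ => (1:F))

/-- Generators of the edge-difference subspace. -/
noncomputable def edgeVec (Γ : SimpleGraph Ω) :
    {p : Ω × Ω // p.1 < p.2 ∧ Γ.Adj p.1 p.2} → (Ω → F) :=
  fun p => dd F p.1.1 - dd F p.1.2

lemma rank_diff (Γ : SimpleGraph Ω) (E : Finset (Finset Ω)) :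
    (diffMatrix F Γ E).rank
      = finrank F ((Submodule.span F (Set.range (edgeVec F Γ))).map (psiE F E)) := by
  have hfun : (diffMatrix F Γ E) = fun p => (psiE F E) (edgeVec F Γ p) := by
    funext p B
    simp only [diffMatrix, edgeVec, map_sub, Pi.sub_apply, psiE_dd]
  have hspan : Submodule.span F (Set.range (diffMatrix F Γ E))
      = Submodule.map (psiE F E) (Submodule.span F (Set.range (edgeVec F Γ))) := by
    rw [hfun, show (fun p => (psiE F E) (edgeVec F Γ p)) = (psiE F E) ∘ (edgeVec F Γ) from rfl,
      Set.range_comp, Submodule.span_image]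
  rw [← Matrix.rank_transpose, Matrix.rank, Matrix.range_mulVecLin]
  show finrank F (Submodule.span F (Set.range (diffMatrix F Γ E))) = _
  rw [hspan]

lemma finrank_aug [Nonempty Ω] :
    finrank F (augSubmodule F Ω) + 1 = Fintype.card Ω := by
  classical
  set η := (∑ ω : Ω, (LinearMap.proj ω : (Ω → F) →ₗ[F] F)) with hη
  have hsurj : Function.Surjective η := by
    intro c
    refine ⟨c • dd F (Classical.arbitrary Ω), ?_⟩
    simp [hη, LinearMap.sum_apply, dd, Finset.sum_ite_eq]
  have hrange : LinearMap.range η = ⊤ := LinearMap.range_eq_top.2 hsurj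
  have h := LinearMap.finrank_range_add_finrank_ker η
  rw [hrange] at h
  simp only [finrank_top] at h
  have hF : finrank F F = 1 := finrank_self F
  rw [show augSubmodule F Ω = LinearMap.ker η from rfl]
  rw [hF, Module.finrank_pi] at h
  omega

end AuxLemmas

section JLemmas

variable {N : Type*} [Monoid N]

lemma mem_jIdeal_self (a : N) : a ∈ jIdeal a := ⟨1, 1, by simp⟩

lemma mul_mem_jIdeal (u a v : N) : u * a * v ∈ jIdeal a := ⟨u, v, rfl⟩

lemma mul_mem_jIdeal_left (u a : N) : u * a ∈ jIdeal a := ⟨u, 1, by simp⟩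

lemma mul_mem_jIdeal_right (a v : N) : a * v ∈ jIdeal a := ⟨1, v, by simp⟩

lemma jIdeal_subset {a b : N} (h : a ∈ jIdeal b) : jIdeal a ⊆ jIdeal b := by
  obtain ⟨u, v, rfl⟩ := h
  rintro x ⟨p, q, rfl⟩
  exact ⟨p * u, v * q, by simp [mul_assoc]⟩

lemma minIdeal_mul_mem {a : N} (ha : a ∈ minIdeal N) (u v : N) :
    u * a * v ∈ minIdeal N := by
  intro b
  obtain ⟨p, q, hpq⟩ := ha b
  exact ⟨u * p, q * v, by rw [hpq]; simp [mul_assoc]⟩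

end JLemmas

/-- For a finite transformation monoid `(M, Ω)`, `|Ω| = n > 1`, such
that the minimal ideal contains a constant map, `M \ I(M)` has a unique minimal 𝒥-class
`J` which is regular, and every element of `J` has rank `2`, the augmentation submodule
`Aug(FΩ)` is a simple `FM`-module (equivalently: it is nonzero and has no nonzero proper
`F`-subspace invariant under the action of `M`) if and only if the difference matrix
`I(𝓔)^{Γ(M)}` has rank `n - 1` over `F`. -/
theorem stmt3 (F : Type*) [Field F] {Ω : Type*} [Fintype Ω] [LinearOrder Ω]
    (n : ℕ) (hn : Fintype.card Ω = n) (hn1 : 1 < n)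
    (M : Submonoid (Function.End Ω))
    (hconst : ∃ a : ↥M, a ∈ minIdeal ↥M ∧ ∃ ω₀ : Ω,
      ∀ ω : Ω, (a : Function.End Ω) ω = ω₀)
    (J : Set ↥M)
    (hJclass : ∃ a ∈ J, J = {b : ↥M | jIdeal a = jIdeal b})
    (hJnotmin : ∀ a ∈ J, a ∉ minIdeal ↥M)
    (hJmin : ∀ c : ↥M, c ∉ minIdeal ↥M → ∀ a ∈ J, a ∈ jIdeal c)
    (hJreg : ∀ a ∈ J, ∃ x : ↥M, a = a * x * a)
    (hJrank2 : ∀ a ∈ J,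
      (Finset.univ.image ((a : Function.End Ω) : Ω → Ω)).card = 2) :
    ((augSubmodule F Ω ≠ ⊥ ∧
        ∀ W : Submodule F (Ω → F), W ≤ augSubmodule F Ω →
          (∀ m : ↥M, ∀ v ∈ W, act F (m : Function.End Ω) v ∈ W) →
          W = ⊥ ∨ W = augSubmodule F Ω) ↔
      (diffMatrix F (gammaGraph M J) (setSystem M J)).rank = n - 1) := by
  classical
  obtain ⟨c₀, hc₀min, ω₀, hc₀⟩ := hconst
  obtain ⟨a₀, ha₀J, hJ⟩ := hJclass
  have hNtriv : Nontrivial Ω := Fintype.one_lt_card_iff_nontrivial.1 (by rw [hn]; exact hn1)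
  have hmemJ : ∀ b : ↥M, b ∈ J ↔ jIdeal a₀ = jIdeal b := by
    intro b; rw [hJ]; exact Iff.rfl
  have hconst_of_min : ∀ a : ↥M, a ∈ minIdeal ↥M → ∀ x y : Ω,
      (a : Function.End Ω) x = (a : Function.End Ω) y := by
    intro a ha x y
    obtain ⟨u, v, huv⟩ := ha c₀
    rw [huv]
    show (u : Function.End Ω) ((c₀ : Function.End Ω) ((v : Function.End Ω) x))
      = (u : Function.End Ω) ((c₀ : Function.End Ω) ((v : Function.End Ω) y))
    rw [hc₀, hc₀]
  have hnotmin : ∀ (t : ↥M) (x y : Ω),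
      (t : Function.End Ω) x ≠ (t : Function.End Ω) y → t ∉ minIdeal ↥M :=
    fun t x y h hm => h (hconst_of_min t hm x y)
  have hdown : ∀ e : ↥M, e ∈ J → ∀ t : ↥M, t ∈ jIdeal e → t ∉ minIdeal ↥M → t ∈ J := by
    intro e he t hte htm
    have h1 : e ∈ jIdeal t := hJmin t htm e he
    rw [hmemJ] at he ⊢
    rw [he]
    exact Set.Subset.antisymm (jIdeal_subset h1) (jIdeal_subset hte)
  have hidsq : ∀ e : ↥M, e ∈ idempotentsIn J →
      ∀ x, (e : Function.End Ω) ((e : Function.End Ω) x) = (e : Function.End Ω) x := by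
    intro e he x
    have h : ((e * e : ↥M) : Function.End Ω) x = (e : Function.End Ω) x :=
      congrArg (fun z : ↥M => (z : Function.End Ω) x) he.2
    exact h
  have hstruct : ∀ e : ↥M, e ∈ idempotentsIn J →
      ∃ α β : Ω, α ≠ β ∧ (e : Function.End Ω) α = α ∧ (e : Function.End Ω) β = β ∧
        (∀ x, (e : Function.End Ω) x = α ∨ (e : Function.End Ω) x = β) :=
    fun e he => idem_struct (hJrank2 e he.1) (hidsq e he)
  have hidem_left : ∀ t : ↥M, t ∈ J → ∃ e : ↥M, e ∈ idempotentsIn J ∧ e * t = t := by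
    intro t ht
    obtain ⟨x, hx⟩ := hJreg t ht
    have het : (t * x) * t = t := hx.symm
    have hee : (t * x) * (t * x) = t * x := by
      rw [← mul_assoc, het]
    have hnm : (t * x) ∉ minIdeal ↥M := by
      intro hmem
      apply hJnotmin t ht
      have h2 : 1 * (t * x) * t ∈ minIdeal ↥M := minIdeal_mul_mem hmem 1 t
      rw [one_mul, het] at h2
      exact h2
    exact ⟨t * x, ⟨hdown t ht (t * x) (mul_mem_jIdeal_right t x) hnm, hee⟩, het⟩
  have hidem_right : ∀ t : ↥M, t ∈ J → ∃ e : ↥M, e ∈ idempotentsIn J ∧ t * e = t := by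
    intro t ht
    obtain ⟨x, hx⟩ := hJreg t ht
    have het : t * (x * t) = t := by rw [← mul_assoc]; exact hx.symm
    have hee : (x * t) * (x * t) = x * t := by
      rw [mul_assoc x t (x * t), het]
    have hnm : (x * t) ∉ minIdeal ↥M := by
      intro hmem
      apply hJnotmin t ht
      have h2 : t * (x * t) * 1 ∈ minIdeal ↥M := minIdeal_mul_mem hmem t 1
      rw [mul_one, het] at h2
      exact h2
    exact ⟨x * t, ⟨hdown t ht (x * t) (mul_mem_jIdeal_left x t) hnm, hee⟩, het⟩
  have hadj : ∀ γ δ : Ω, (gammaGraph M J).Adj γ δ ↔ γ ≠ δ ∧ ∃ e ∈ idempotentsIn J,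
      (e : Function.End Ω) γ = γ ∧ (e : Function.End Ω) δ = δ := by
    intro γ δ
    rw [gammaGraph, SimpleGraph.fromRel_adj]
    constructor
    · rintro ⟨hne, h | h⟩
      · exact ⟨hne, h⟩
      · obtain ⟨e, he, h1, h2⟩ := h; exact ⟨hne, e, he, h2, h1⟩
    · rintro ⟨hne, h⟩; exact ⟨hne, Or.inl h⟩
  have hkerclass : ∀ e : ↥M, e ∈ idempotentsIn J → ∀ ω : Ω,
      (Finset.univ.filter (fun x => (e : Function.End Ω) x = (e : Function.End Ω) ω))
        ∈ setSystem M J := by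
    intro e he ω
    simp only [setSystem, Finset.mem_filter, Finset.mem_univ, true_and]
    exact ⟨e, he, ω, rfl⟩
  rw [rank_diff F (gammaGraph M J) (setSystem M J)]
  set Γ := gammaGraph M J with hΓdef
  set ψ := psiE F (setSystem M J) with hψdef
  set U := Submodule.span F (Set.range (edgeVec F Γ)) with hUdef
  have hgen_mem : ∀ {γ δ : Ω}, Γ.Adj γ δ → dd F γ - dd F δ ∈ U := by
    intro γ δ h
    rcases lt_or_gt_of_ne h.ne with hlt | hlt
    · exact Submodule.subset_span ⟨⟨(γ, δ), hlt, h⟩, rfl⟩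
    · rw [show dd F γ - dd F δ = -(dd F δ - dd F γ) from (neg_sub _ _).symm]
      exact Submodule.neg_mem _ (Submodule.subset_span ⟨⟨(δ, γ), hlt, h.symm⟩, rfl⟩)
  have hU_le : U ≤ augSubmodule F Ω := by
    rw [hUdef, Submodule.span_le]
    rintro _ ⟨p, rfl⟩
    exact dd_sub_mem_aug F (ne_of_lt p.2.1)
  have haug : finrank F (augSubmodule F Ω) + 1 = n := by
    rw [← hn]; exact finrank_aug F
  set g : ↥(augSubmodule F Ω) →ₗ[F] ({B // B ∈ setSystem M J} → F) :=
    ψ.comp (augSubmodule F Ω).subtype with hgdef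
  have hrange_g : LinearMap.range g = (augSubmodule F Ω).map ψ := by
    rw [hgdef, LinearMap.range_comp, Submodule.range_subtype]
  have hrn : finrank F (LinearMap.range g) + finrank F (LinearMap.ker g)
      = finrank F (augSubmodule F Ω) := LinearMap.finrank_range_add_finrank_ker g
  have hU_inv : ∀ m : ↥M, ∀ v ∈ U, act F (m : Function.End Ω) v ∈ U := by
    intro m v hv
    have hle : U ≤ Submodule.comap (actL F (m : Function.End Ω)) U := by
      rw [hUdef, Submodule.span_le]
      rintro _ ⟨p, rfl⟩
      simp only [SetLike.mem_coe, Submodule.mem_comap, actL_apply]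
      erw [show edgeVec F Γ p = dd F p.1.1 - dd F p.1.2 from rfl, actL_apply, act_dd_sub]
      by_cases hmm : (m : Function.End Ω) p.1.1 = (m : Function.End Ω) p.1.2
      · rw [hmm]; simp
      · obtain ⟨hne', e, he, h1, h2⟩ := (hadj _ _).1 p.2.2
        have hval1 : ((m * e : ↥M) : Function.End Ω) p.1.1 = (m : Function.End Ω) p.1.1 := by
          show (m : Function.End Ω) ((e : Function.End Ω) p.1.1) = _
          rw [h1]
        have hval2 : ((m * e : ↥M) : Function.End Ω) p.1.2 = (m : Function.End Ω) p.1.2 := by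
          show (m : Function.End Ω) ((e : Function.End Ω) p.1.2) = _
          rw [h2]
        have htne : ((m * e : ↥M) : Function.End Ω) p.1.1
            ≠ ((m * e : ↥M) : Function.End Ω) p.1.2 := by
          rw [hval1, hval2]; exact hmm
        have htJ : (m * e : ↥M) ∈ J :=
          hdown e he.1 (m * e) (mul_mem_jIdeal_left m e) (hnotmin _ _ _ htne)
        obtain ⟨e', he', he't⟩ := hidem_left (m * e) htJ
        have hfix1 : (e' : Function.End Ω) ((m : Function.End Ω) p.1.1)
            = (m : Function.End Ω) p.1.1 := by
          have h : (e' : Function.End Ω) (((m * e : ↥M) : Function.End Ω) p.1.1)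
              = ((m * e : ↥M) : Function.End Ω) p.1.1 :=
            congrArg (fun z : ↥M => (z : Function.End Ω) p.1.1) he't
          rwa [hval1] at h
        have hfix2 : (e' : Function.End Ω) ((m : Function.End Ω) p.1.2)
            = (m : Function.End Ω) p.1.2 := by
          have h : (e' : Function.End Ω) (((m * e : ↥M) : Function.End Ω) p.1.2)
              = ((m * e : ↥M) : Function.End Ω) p.1.2 :=
            congrArg (fun z : ↥M => (z : Function.End Ω) p.1.2) he't
          rwa [hval2] at h
        exact hgen_mem ((hadj _ _).2 ⟨hmm, e', he', hfix1, hfix2⟩)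
    have h := hle hv
    exact h
  have htrans : ∀ (W : Submodule F (Ω → F)),
      (∀ m : ↥M, ∀ v ∈ W, act F (m : Function.End Ω) v ∈ W) →
      ∀ (e : ↥M), e ∈ idempotentsIn J → ∀ α β : Ω,
      (∀ x, (e : Function.End Ω) x = α ∨ (e : Function.End Ω) x = β) →
      ∀ (f : ↥M), f ∈ J → ∀ γ δ : Ω, γ ≠ δ →
      (f : Function.End Ω) γ = γ → (f : Function.End Ω) δ = δ →
      dd F α - dd F β ∈ W → dd F γ - dd F δ ∈ W := by
    intro W hW e he α β hcov f hf γ δ hgd hfγ hfδ hv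
    have hfe : f ∈ jIdeal e := by
      have h1 := (hmemJ e).1 he.1
      have h2 := (hmemJ f).1 hf
      have h3 := mem_jIdeal_self f
      rw [← h2, h1] at h3
      exact h3
    obtain ⟨p', q', hpq⟩ := hfe
    have hγ2 : (p' : Function.End Ω) ((e : Function.End Ω) ((q' : Function.End Ω) γ)) = γ := by
      have h : (f : Function.End Ω) γ
          = (p' : Function.End Ω) ((e : Function.End Ω) ((q' : Function.End Ω) γ)) :=
        congrArg (fun z : ↥M => (z : Function.End Ω) γ) hpq
      rw [← h]; exact hfγ
    have hδ2 : (p' : Function.End Ω) ((e : Function.End Ω) ((q' : Function.End Ω) δ)) = δ := by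
      have h : (f : Function.End Ω) δ
          = (p' : Function.End Ω) ((e : Function.End Ω) ((q' : Function.End Ω) δ)) :=
        congrArg (fun z : ↥M => (z : Function.End Ω) δ) hpq
      rw [← h]; exact hfδ
    have hactW : act F ((f * p' : ↥M) : Function.End Ω) (dd F α - dd F β) ∈ W :=
      hW (f * p') _ hv
    have hact_eq : act F ((f * p' : ↥M) : Function.End Ω) (dd F α - dd F β)
        = dd F ((f : Function.End Ω) ((p' : Function.End Ω) α))
          - dd F ((f : Function.End Ω) ((p' : Function.End Ω) β)) :=
      act_dd_sub F _ α β
    rcases hcov ((q' : Function.End Ω) γ) with hw1 | hw1 <;>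
      rcases hcov ((q' : Function.End Ω) δ) with hw2 | hw2
    · exfalso
      apply hgd
      rw [← hγ2, ← hδ2, hw1, hw2]
    · have hfpα : (f : Function.End Ω) ((p' : Function.End Ω) α) = γ := by
        rw [← hw1, hγ2]; exact hfγ
      have hfpβ : (f : Function.End Ω) ((p' : Function.End Ω) β) = δ := by
        rw [← hw2, hδ2]; exact hfδ
      rw [hact_eq, hfpα, hfpβ] at hactW
      exact hactW
    · have hfpα : (f : Function.End Ω) ((p' : Function.End Ω) α) = δ := by
        rw [← hw2, hδ2]; exact hfδ
      have hfpβ : (f : Function.End Ω) ((p' : Function.End Ω) β) = γ := by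
        rw [← hw1, hγ2]; exact hfγ
      rw [hact_eq, hfpα, hfpβ] at hactW
      have h := W.neg_mem hactW
      rwa [neg_sub] at h
    · exfalso
      apply hgd
      rw [← hγ2, ← hδ2, hw1, hw2]
  have hK_inv : ∀ m : ↥M, ∀ v : Ω → F, v ∈ augSubmodule F Ω → ψ v = 0 →
      ψ (act F (m : Function.End Ω) v) = 0 := by
    intro m v hva hvk
    funext B
    obtain ⟨B, hB⟩ := B
    have hB' := hB
    simp only [setSystem, Finset.mem_filter, Finset.mem_univ, true_and] at hB'
    obtain ⟨e, he, ω', rfl⟩ := hB'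
    have hclaim : ∀ (t : ↥M), t ∈ jIdeal e → ∀ c : Ω,
        ∑ ω ∈ Finset.univ.filter (fun ω => (t : Function.End Ω) ω = c), v ω = 0 := by
      intro t hte c
      by_cases htm : t ∈ minIdeal ↥M
      · have hcst := hconst_of_min t htm
        by_cases hc : (t : Function.End Ω) ω₀ = c
        · have hful : Finset.univ.filter (fun ω => (t : Function.End Ω) ω = c)
              = Finset.univ := by
            apply Finset.filter_true_of_mem
            intro x _
            rw [hcst x ω₀, hc]
          rw [hful]
          exact (mem_aug F).1 hva
        · have hemp : Finset.univ.filter (fun ω => (t : Function.End Ω) ω = c)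
              = ∅ := by
            apply Finset.filter_false_of_mem
            intro x _ hcx
            exact hc (by rw [hcst ω₀ x, hcx])
          rw [hemp]
          simp
      · have htJ : t ∈ J := hdown e he.1 t hte htm
        obtain ⟨e'', he'', hte''⟩ := hidem_right t htJ
        obtain ⟨γ, δ, hgd, hγ, hδ, hcov⟩ := hstruct e'' he''
        have hteval : ∀ ω, (t : Function.End Ω) ((e'' : Function.End Ω) ω)
            = (t : Function.End Ω) ω :=
          fun ω => congrArg (fun z : ↥M => (z : Function.End Ω) ω) hte''
        have hpart : ∀ ρ : Ω, (e'' : Function.End Ω) ρ = ρ →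
            ∑ ω ∈ Finset.univ.filter (fun ω => (e'' : Function.End Ω) ω = ρ),
              (if (t : Function.End Ω) ω = c then v ω else 0) = 0 := by
          intro ρ hρ
          have hcongr : ∀ ω ∈ Finset.univ.filter
              (fun ω => (e'' : Function.End Ω) ω = ρ),
              (if (t : Function.End Ω) ω = c then v ω else 0)
                = (if (t : Function.End Ω) ρ = c then v ω else 0) := by
            intro ω hω
            simp only [Finset.mem_filter] at hω
            rw [← hω.2, hteval]
          rw [Finset.sum_congr rfl hcongr]
          by_cases hc : (t : Function.End Ω) ρ = c
          · simp only [hc, if_true]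
            have hBmem : (Finset.univ.filter
                (fun ω => (e'' : Function.End Ω) ω = ρ)) ∈ setSystem M J := by
              have h := hkerclass e'' he'' ρ
              rwa [hρ] at h
            have h0 := congrFun hvk ⟨_, hBmem⟩
            exact h0
          · simp [hc]
        have key := Finset.sum_filter_add_sum_filter_not Finset.univ
            (fun ω => (e'' : Function.End Ω) ω = γ)
            (fun ω => if (t : Function.End Ω) ω = c then v ω else 0)
        have hfc := filter_not_cover hgd hcov
        have hB0 : (∑ x ∈ Finset.univ.filter (fun ω => ¬ (e'' : Function.End Ω) ω = γ),
            if (t : Function.End Ω) x = c then v x else 0) = 0 :=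
          Eq.trans (Finset.sum_congr (by convert hfc) (fun _ _ => rfl)) (hpart δ hδ)
        rw [Finset.sum_filter]
        convert key.symm.trans ((congrArg₂ (· + ·) (hpart γ hγ) hB0).trans (add_zero 0))
    have hs : ψ (act F (m : Function.End Ω) v)
        ⟨Finset.univ.filter (fun x =>
            (e : Function.End Ω) x = (e : Function.End Ω) ω'), hB⟩
        = ∑ x ∈ Finset.univ.filter (fun x =>
            (e : Function.End Ω) x = (e : Function.End Ω) ω'),
            act F (m : Function.End Ω) v x := rfl
    erw [Pi.zero_apply, hs, sum_act_filter]
    exact hclaim (e * m) (mul_mem_jIdeal_right e m) ((e : Function.End Ω) ω')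
  obtain ⟨e₁, he₁, _⟩ := hidem_left a₀ ha₀J
  obtain ⟨α₁, β₁, hab₁, hα₁, hβ₁, hcov₁⟩ := hstruct e₁ he₁
  have hAdj₁ : Γ.Adj α₁ β₁ := (hadj α₁ β₁).2 ⟨hab₁, e₁, he₁, hα₁, hβ₁⟩
  constructor
  · rintro ⟨hne, hsimp⟩
    have hU_ne : U ≠ ⊥ := by
      intro hbot
      exact dd_sub_ne_zero F hab₁ (by
        have h := hgen_mem hAdj₁
        rwa [hbot, Submodule.mem_bot] at h)
    have hUaug : U = augSubmodule F Ω := (hsimp U hU_le hU_inv).resolve_left hU_ne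
    have hKinv' : ∀ m : ↥M, ∀ v ∈ (augSubmodule F Ω ⊓ LinearMap.ker ψ),
        act F (m : Function.End Ω) v ∈ (augSubmodule F Ω ⊓ LinearMap.ker ψ) := by
      intro m v hv
      rw [Submodule.mem_inf] at hv ⊢
      exact ⟨act_mem_aug F _ hv.1,
        LinearMap.mem_ker.2 (hK_inv m v hv.1 (LinearMap.mem_ker.1 hv.2))⟩
    have hKne : (augSubmodule F Ω ⊓ LinearMap.ker ψ) ≠ augSubmodule F Ω := by
      intro hEq
      have hmem : dd F α₁ - dd F β₁ ∈ augSubmodule F Ω := dd_sub_mem_aug F hab₁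
      rw [← hEq, Submodule.mem_inf] at hmem
      have hker := LinearMap.mem_ker.1 hmem.2
      have hBmem : (Finset.univ.filter (fun x =>
          (e₁ : Function.End Ω) x = (e₁ : Function.End Ω) α₁)) ∈ setSystem M J :=
        hkerclass e₁ he₁ α₁
      have h0 := congrFun hker ⟨_, hBmem⟩
      rw [Pi.zero_apply, map_sub, Pi.sub_apply, psiE_dd, psiE_dd] at h0
      have hαin : α₁ ∈ Finset.univ.filter (fun x =>
          (e₁ : Function.End Ω) x = (e₁ : Function.End Ω) α₁) := by
        simp
      have hβnin : β₁ ∉ Finset.univ.filter (fun x =>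
          (e₁ : Function.End Ω) x = (e₁ : Function.End Ω) α₁) := by
        simp only [Finset.mem_filter, Finset.mem_univ, true_and, hα₁, hβ₁]
        exact fun hc => hab₁ hc.symm
      rw [if_pos hαin, if_neg hβnin, sub_zero] at h0
      exact one_ne_zero h0
    have hKbot : (augSubmodule F Ω ⊓ LinearMap.ker ψ) = ⊥ :=
      (hsimp _ inf_le_left hKinv').resolve_right hKne
    have hkerg : LinearMap.ker g = ⊥ := by
      rw [eq_bot_iff]
      rintro ⟨x, hx⟩ hxk
      rw [LinearMap.mem_ker] at hxk
      have hx0 : x ∈ (augSubmodule F Ω ⊓ LinearMap.ker ψ) :=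
        Submodule.mem_inf.2 ⟨hx, LinearMap.mem_ker.2 hxk⟩
      rw [hKbot, Submodule.mem_bot] at hx0
      simp only [Submodule.mem_bot]
      exact Subtype.ext hx0
    have h1 : finrank F (LinearMap.ker g) = 0 := by rw [hkerg]; exact finrank_bot F _
    rw [hUaug, ← hrange_g]
    omega
  · intro hr
    have haug_ne : augSubmodule F Ω ≠ ⊥ := by
      intro hbot
      apply dd_sub_ne_zero F hab₁
      have h := dd_sub_mem_aug (F := F) hab₁
      rwa [hbot, Submodule.mem_bot] at h
    refine ⟨haug_ne, ?_⟩
    intro W hWle hWinv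
    by_cases hWbot : W = ⊥
    · exact Or.inl hWbot
    right
    have hUm_le : finrank F (U.map ψ) ≤ finrank F U := Submodule.finrank_map_le ψ U
    have hUaug : U = augSubmodule F Ω := by
      apply Submodule.eq_of_le_of_finrank_le hU_le
      omega
    have hinj : ∀ v ∈ augSubmodule F Ω, ψ v = 0 → v = 0 := by
      have h1 : finrank F (LinearMap.range g) = n - 1 := by
        rw [hrange_g, ← hUaug]; exact hr
      have h2 : finrank F (LinearMap.ker g) = 0 := by omega
      have h3 : LinearMap.ker g = ⊥ := Submodule.finrank_eq_zero.1 h2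
      intro v hv hψ
      have hm : (⟨v, hv⟩ : augSubmodule F Ω) ∈ LinearMap.ker g := by
        rw [LinearMap.mem_ker]
        exact hψ
      rw [h3, Submodule.mem_bot] at hm
      exact congrArg Subtype.val hm
    obtain ⟨v, hvW, hv0⟩ := (Submodule.ne_bot_iff W).1 hWbot
    have hva : v ∈ augSubmodule F Ω := hWle hvW
    have hψv : ψ v ≠ 0 := fun h => hv0 (hinj v hva h)
    have hex : ∃ B : {B // B ∈ setSystem M J}, ψ v B ≠ 0 := by
      by_contra h
      push_neg at h
      exact hψv (funext fun B => h B)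
    obtain ⟨⟨B, hB⟩, hBne⟩ := hex
    have hB' := hB
    simp only [setSystem, Finset.mem_filter, Finset.mem_univ, true_and] at hB'
    obtain ⟨e, he, ω', rfl⟩ := hB'
    obtain ⟨α, β, hab, hα, hβ, hcov⟩ := hstruct e he
    have hs : ψ v ⟨Finset.univ.filter (fun x =>
          (e : Function.End Ω) x = (e : Function.End Ω) ω'), hB⟩
        = ∑ x ∈ Finset.univ.filter (fun x =>
          (e : Function.End Ω) x = (e : Function.End Ω) ω'), v x := rfl
    have hsum0 : (∑ ω ∈ Finset.univ.filter (fun ω => (e : Function.End Ω) ω = α), v ω)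
        + (∑ ω ∈ Finset.univ.filter (fun ω => (e : Function.End Ω) ω = β), v ω) = 0 := by
      have h0 := (mem_aug F).1 hva
      have key := Finset.sum_filter_add_sum_filter_not Finset.univ
        (fun ω => (e : Function.End Ω) ω = α) v
      have hfc := filter_not_cover hab hcov
      refine Eq.trans ?_ (key.trans h0)
      exact congrArg₂ (· + ·) rfl (Finset.sum_congr (by convert hfc.symm) (fun _ _ => rfl))
    have hSne : (∑ ω ∈ Finset.univ.filter
        (fun ω => (e : Function.End Ω) ω = α), v ω) ≠ 0 := by
      rcases hcov ω' with h | h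
      · rw [hs, h] at hBne
        exact hBne
      · rw [hs, h] at hBne
        intro hS0
        apply hBne
        rw [hS0, zero_add] at hsum0
        exact hsum0
    have hSact : act F (e : Function.End Ω) v
        = (∑ ω ∈ Finset.univ.filter
            (fun ω => (e : Function.End Ω) ω = α), v ω) • (dd F α - dd F β) :=
      by convert act_idem F hab hα hβ hcov hva
    have hedge : dd F α - dd F β ∈ W := by
      have h1 : act F (e : Function.End Ω) v ∈ W := hWinv e v hvW
      rw [hSact] at h1
      have h2 := W.smul_mem (∑ ω ∈ Finset.univ.filter
          (fun ω => (e : Function.End Ω) ω = α), v ω)⁻¹ h1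
      rwa [smul_smul, inv_mul_cancel₀ hSne, one_smul] at h2
    have hUW : U ≤ W := by
      rw [hUdef, Submodule.span_le]
      rintro _ ⟨p, rfl⟩
      obtain ⟨hne', f, hf, h1, h2⟩ := (hadj _ _).1 p.2.2
      exact htrans W hWinv e he α β hcov f hf.1 p.1.1 p.1.2 hne' h1 h2 hedge
    exact le_antisymm hWle (hUaug ▸ hUW)
end

section
/- Let Ω = {ω_1, …, ω_6} and let 𝓘 = { {ω_1, ω_2, ω_3}, {ω_3, ω_4, ω_5}, {ω_5, ω_6, ω_1} }. If P is a partition of Ω into exactly 3 nonempty blocks satisfying the 𝒥-minimal compatibility condition with respect to 𝓘, then P is one of the following four partitions: {{ω_1, ω_2, ω_3}, {ω_4, ω_6}, {ω_5}}; {{ω_3, ω_4, ω_5}, {ω_2, ω_6}, {ω_1}}; {{ω_5, ω_6, ω_1}, {ω_2, ω_4}, {ω_3}}; {{ω_2, ω_5}, {ω_4, ω_1}, {ω_6, ω_3}}. -/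
/-!
A partition into `r` blocks is the fibre partition of a surjective colouring `Ω → Fin r`, and
compatibility says that each of the three triangles is monochromatic or rainbow. Consecutive
triangles share a corner. If two triangles were monochromatic, the third would have two corners of
one colour, hence be monochromatic as well, leaving a single colour. If exactly one is
monochromatic, say `{ω₁, ω₂, ω₃}`, then `ω₄` and `ω₆` both avoid the colour of that triangle and
the colour of `ω₅`, so they share the third colour. If all three are rainbow, `ω₁, ω₃, ω₅` have
distinct colours and each of `ω₂, ω₄, ω₆` takes the colour of the opposite corner.
-/

/-- `P` is a partition of `Ω` into exactly `r` nonempty pairwise disjoint blocks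
whose union is `Ω`. -/
def isPartitionInto {Ω : Type*} [Fintype Ω] [DecidableEq Ω]
    (P : Finset (Finset Ω)) (r : ℕ) : Prop :=
  P.card = r ∧ (∀ B ∈ P, B.Nonempty) ∧
    (∀ B ∈ P, ∀ C ∈ P, B ≠ C → Disjoint B C) ∧ P.biUnion id = Finset.univ

/-- The 𝒥-minimal compatibility condition: every member `S` of `I` is either contained
in a single block of `P`, or its elements lie in pairwise distinct blocks of `P`. -/
def JCompat {Ω : Type*} [DecidableEq Ω] (P : Finset (Finset Ω))
    (I : Finset (Finset Ω)) : Prop :=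
  ∀ S ∈ I, (∃ B ∈ P, S ⊆ B) ∨
    (∀ x ∈ S, ∀ y ∈ S, ∀ B ∈ P, x ∈ B → y ∈ B → x = y)

open Finset Function

section Colouring

variable {Ω κ : Type*}

def fiberPartition [Fintype Ω] [DecidableEq Ω] [DecidableEq κ] (c : Ω → κ) :
    Finset (Finset Ω) :=
  univ.image fun x => univ.filter (c · = c x)

def MonoOrRainbowOn (c : Ω → κ) (S : Finset Ω) : Prop :=
  (∀ x ∈ S, ∀ y ∈ S, c x = c y) ∨ ∀ x ∈ S, ∀ y ∈ S, c x = c y → x = y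

instance [DecidableEq Ω] [DecidableEq κ] (c : Ω → κ) (S : Finset Ω) :
    Decidable (MonoOrRainbowOn c S) :=
  inferInstanceAs (Decidable (_ ∨ _))

variable [Fintype Ω] [DecidableEq Ω]

theorem isPartitionInto.exists_surjective_fiberPartition_eq {P : Finset (Finset Ω)} {r : ℕ}
    (hP : isPartitionInto P r) : ∃ c : Ω → Fin r, Surjective c ∧ fiberPartition c = P := by
  obtain ⟨hcard, hne, hdisj, hcover⟩ := hP
  have hcovered : ∀ x, ∃ B ∈ P, x ∈ B := fun x => by
    simpa using (hcover ▸ mem_univ x : x ∈ P.biUnion id)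
  choose block block_mem mem_block using hcovered
  have block_eq : ∀ B ∈ P, ∀ x ∈ B, block x = B := fun B hB x hx => by
    by_contra h
    exact disjoint_left.mp (hdisj _ (block_mem x) B hB h) (mem_block x) hx
  let e : P ≃ Fin r := P.equivFin.trans (finCongr hcard)
  let c : Ω → Fin r := fun x => e ⟨block x, block_mem x⟩
  have fiber_eq : ∀ x, univ.filter (c · = c x) = block x := fun x => by
    ext y
    simp only [c, mem_filter, mem_univ, true_and, e.injective.eq_iff, Subtype.mk.injEq]
    exact ⟨fun h => h ▸ mem_block y, block_eq _ (block_mem x) y⟩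
  refine ⟨c, fun k => ?_, ?_⟩
  · obtain ⟨x, hx⟩ := hne _ (e.symm k).2
    refine ⟨x, ?_⟩
    simp only [c, block_eq _ (e.symm k).2 x hx, Subtype.coe_eta, Equiv.apply_symm_apply]
  · ext B
    simp only [fiberPartition, mem_image, mem_univ, true_and, fiber_eq]
    refine ⟨fun ⟨x, hx⟩ => hx ▸ block_mem x, fun hB => ?_⟩
    obtain ⟨x, hx⟩ := hne B hB
    exact ⟨x, block_eq B hB x hx⟩

theorem JCompat.monoOrRainbowOn [DecidableEq κ] {c : Ω → κ} {I : Finset (Finset Ω)}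
    (h : JCompat (fiberPartition c) I) : ∀ S ∈ I, MonoOrRainbowOn c S := by
  intro S hS
  rcases h S hS with ⟨B, hB, hSB⟩ | hdistinct
  · left
    obtain ⟨z, -, rfl⟩ := mem_image.mp hB
    intro x hx y hy
    rw [(mem_filter.mp (hSB hx)).2, (mem_filter.mp (hSB hy)).2]
  · right
    intro x hx y hy hxy
    exact hdistinct x hx y hy _ (mem_image_of_mem _ (mem_univ x)) (by simp) (by simp [hxy])

end Colouring

theorem fiberPartition_of_monoOrRainbowOn_triangles :
    ∀ c : Fin 6 → Fin 3, Surjective c →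
      (∀ S ∈ ({{0,1,2},{2,3,4},{4,5,0}} : Finset (Finset (Fin 6))), MonoOrRainbowOn c S) →
      fiberPartition c = {{0,1,2},{3,5},{4}} ∨ fiberPartition c = {{2,3,4},{1,5},{0}} ∨
      fiberPartition c = {{4,5,0},{1,3},{2}} ∨ fiberPartition c = {{1,4},{3,0},{5,2}} := by
  decide +kernel

/- Here `Ω = Fin 6`, with `ω_i` corresponding to `i - 1 : Fin 6`. -/
theorem stmt5 (P : Finset (Finset (Fin 6)))
    (hP : isPartitionInto P 3)
    (hcompat : JCompat P ({{0,1,2},{2,3,4},{4,5,0}} : Finset (Finset (Fin 6)))) :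
    P = {{0,1,2},{3,5},{4}} ∨ P = {{2,3,4},{1,5},{0}} ∨
    P = {{4,5,0},{1,3},{2}} ∨ P = {{1,4},{3,0},{5,2}} := by
  obtain ⟨c, hc, rfl⟩ := hP.exists_surjective_fiberPartition_eq
  exact fiberPartition_of_monoOrRainbowOn_triangles c hc hcompat.monoOrRainbowOn
end

section
/- Let Ω = {ω_1, …, ω_12} and let 𝓘 = { {ω_1, ω_2, ω_3, ω_4}, {ω_4, ω_5, ω_6, ω_7}, {ω_7, ω_8, ω_9, ω_10}, {ω_10, ω_11, ω_12, ω_1}, {ω_2, ω_5, ω_8, ω_11} }. If P is a partition of Ω into exactly 4 nonempty blocks satisfying the 𝒥-minimal compatibility condition with respect to 𝓘, and the set {ω_1, ω_2, ω_3, ω_4} is contained in a single block of P, then P is one of the two partitions: {{ω_1, ω_2, ω_3, ω_4}, {ω_7, ω_8, ω_9, ω_10}, {ω_5, ω_12}, {ω_11, ω_6}} or {{ω_1, ω_2, ω_3, ω_4, ω_9}, {ω_5, ω_10}, {ω_7, ω_11}, {ω_6, ω_8, ω_12}}. -/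
/-- The collection 𝓘 of `4`-element subsets of `Fin 12`, where `ω_i` corresponds to
`i - 1 : Fin 12`. -/
def I12 : Finset (Finset (Fin 12)) :=
  {{0,1,2,3},{3,4,5,6},{6,7,8,9},{9,10,11,0},{1,4,7,10}}

/-- The second alternative of `JCompat`. -/
def Scattered {Ω : Type*} (P : Finset (Finset Ω)) (S : Finset Ω) : Prop :=
  ∀ x ∈ S, ∀ y ∈ S, ∀ B ∈ P, x ∈ B → y ∈ B → x = y

namespace Scattered

variable {Ω : Type*} {P : Finset (Finset Ω)} {S B C : Finset Ω} {x y : Ω}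

theorem notMem (h : Scattered P S) (hB : B ∈ P) (hyB : y ∈ B)
    (hx : x ∈ S := by decide) (hy : y ∈ S := by decide) (hxy : x ≠ y := by decide) : x ∉ B :=
  fun hxB => hxy (h x hx y hy B hB hxB hyB)

theorem ne_of_mem (h : Scattered P S) (hB : B ∈ P) (hxB : x ∈ B) (hyC : y ∈ C)
    (hx : x ∈ S := by decide) (hy : y ∈ S := by decide) (hxy : x ≠ y := by decide) : B ≠ C := by
  rintro rfl
  exact h.notMem hB hyC hx hy hxy hxB

end Scattered

section Partition

variable {Ω : Type*} [Fintype Ω] [DecidableEq Ω] {P Q : Finset (Finset Ω)} {r : ℕ}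
  {S B C : Finset Ω} {x y : Ω}

theorem Finset.exists_mem_of_biUnion_eq_univ (hQ : Q.biUnion id = Finset.univ) (x : Ω) :
    ∃ C ∈ Q, x ∈ C := by
  simpa using hQ.ge (Finset.mem_univ x)

namespace isPartitionInto

theorem eq_of_mem_of_mem (hP : isPartitionInto P r) (hB : B ∈ P) (hC : C ∈ P) (hxB : x ∈ B)
    (hxC : x ∈ C) : B = C := by
  by_contra hBC
  exact Finset.disjoint_left.mp (hP.2.2.1 B hB C hC hBC) hxB hxC

theorem le_one_of_univ_subset (hP : isPartitionInto P r) (hB : B ∈ P)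
    (huniv : Finset.univ ⊆ B) : r ≤ 1 := by
  rw [← hP.1]
  refine Finset.card_le_one_iff_subset_singleton.mpr ⟨B, fun C hC => ?_⟩
  obtain ⟨y, hy⟩ := hP.2.1 C hC
  exact Finset.mem_singleton.mpr (hP.eq_of_mem_of_mem hC hB hy (huniv (Finset.mem_univ y)))

theorem exists_mem_of_subset_of_card_le (hP : isPartitionInto P r) {s : Finset (Finset Ω)}
    (hs : s ⊆ P) (hcard : r ≤ s.card) (x : Ω) : ∃ B ∈ s, x ∈ B := by
  rw [Finset.eq_of_subset_of_card_le hs (hP.1 ▸ hcard)]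
  exact Finset.exists_mem_of_biUnion_eq_univ hP.2.2.2 x

theorem eq_of_forall_exists_subset (hP : isPartitionInto P r) (hQ : Q.card ≤ r)
    (hcover : Q.biUnion id = Finset.univ) (h : ∀ C ∈ Q, ∃ B ∈ P, C ⊆ B) : P = Q := by
  choose φ hφP hφ using h
  have hφ_eq : ∀ C hC, ∀ B ∈ P, ∀ x ∈ C, x ∈ B → φ C hC = B := fun C hC B hB x hxC hxB =>
    hP.eq_of_mem_of_mem (hφP C hC) hB (hφ C hC hxC) hxB
  have hsurj : ∀ B ∈ P, ∃ C hC, φ C hC = B := by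
    intro B hB
    obtain ⟨x, hx⟩ := hP.2.1 B hB
    obtain ⟨C, hC, hxC⟩ := Finset.exists_mem_of_biUnion_eq_univ hcover x
    exact ⟨C, hC, hφ_eq C hC B hB x hxC hx⟩
  have hinj := Finset.inj_on_of_surj_on_of_card_le φ hφP hsurj (hP.1 ▸ hQ)
  have hφ_self : ∀ C hC, φ C hC = C := by
    refine fun C hC => Finset.Subset.antisymm (fun y hy => ?_) (hφ C hC)
    obtain ⟨C', hC', hyC'⟩ := Finset.exists_mem_of_biUnion_eq_univ hcover y
    rwa [← hinj hC' hC (hφ_eq C' hC' _ (hφP C hC) y hyC' hy)]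
  refine Finset.Subset.antisymm (fun B hB => ?_) (fun C hC => hφ_self C hC ▸ hφP C hC)
  obtain ⟨C, hC, rfl⟩ := hsurj B hB
  rwa [hφ_self]

end isPartitionInto

variable {I : Finset (Finset Ω)}

theorem JCompat.subset_of_mem_of_mem (hP : isPartitionInto P r) (hc : JCompat P I) (hB : B ∈ P)
    (hxB : x ∈ B) (hyB : y ∈ B) (hS : S ∈ I := by decide) (hx : x ∈ S := by decide)
    (hy : y ∈ S := by decide) (hxy : x ≠ y := by decide) : S ⊆ B := by
  obtain ⟨C, hC, hSC⟩ | hsc := hc S hS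
  · rwa [hP.eq_of_mem_of_mem hB hC hxB (hSC hx)]
  · exact absurd (hsc x hx y hy B hB hxB hyB) hxy

theorem JCompat.scattered_of_mem_of_notMem (hP : isPartitionInto P r) (hc : JCompat P I)
    (hB : B ∈ P) (hxB : x ∈ B) (hyB : y ∉ B) (hS : S ∈ I := by decide) (hx : x ∈ S := by decide)
    (hy : y ∈ S := by decide) : Scattered P S := by
  refine (hc S hS).resolve_left fun ⟨C, hC, hSC⟩ => hyB ?_
  rw [hP.eq_of_mem_of_mem hB hC hxB (hSC hx)]
  exact hSC hy

end Partition

namespace I12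

variable {P : Finset (Finset (Fin 12))} {r : ℕ} {B₁ B₂ B₃ B₄ : Finset (Fin 12)}

theorem univ_subset_of_first_two_subset (hP : isPartitionInto P r) (hc : JCompat P I12)
    (hB : B₁ ∈ P) (h₁ : {0,1,2,3} ⊆ B₁) (h₂ : {3,4,5,6} ⊆ B₁) : Finset.univ ⊆ B₁ := by
  have h₅ : {1,4,7,10} ⊆ B₁ :=
    hc.subset_of_mem_of_mem hP hB (x := 1) (y := 4) (h₁ (by decide)) (h₂ (by decide))
  have h₃ : {6,7,8,9} ⊆ B₁ :=
    hc.subset_of_mem_of_mem hP hB (x := 6) (y := 7) (h₂ (by decide)) (h₅ (by decide))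
  have h₄ : {9,10,11,0} ⊆ B₁ :=
    hc.subset_of_mem_of_mem hP hB (x := 9) (y := 0) (h₃ (by decide)) (h₁ (by decide))
  calc Finset.univ = ({0,1,2,3} ∪ {3,4,5,6} ∪ {6,7,8,9} ∪ {9,10,11,0} : Finset (Fin 12)) := by
        decide
    _ ⊆ B₁ := Finset.union_subset (Finset.union_subset (Finset.union_subset h₁ h₂) h₃) h₄

theorem eq_of_third_scattered (hP : isPartitionInto P 4)
    (hB₁ : B₁ ∈ P) (hB₂ : B₂ ∈ P) (hB₃ : B₃ ∈ P) (hB₄ : B₄ ∈ P)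
    (hloc : ∀ x, x ∈ B₁ ∨ x ∈ B₂ ∨ x ∈ B₃ ∨ x ∈ B₄) (h₀₁₂₃ : {0,1,2,3} ⊆ B₁) (h₄ : 4 ∈ B₂)
    (h₅ : 5 ∈ B₃) (h₇ : 7 ∈ B₃) (h₆ : 6 ∈ B₄) (h₁₀ : 10 ∈ B₄)
    (hS₃ : Scattered P {6,7,8,9}) (hS₄ : Scattered P {9,10,11,0}) :
    P = {{0,1,2,3,8},{4,9},{6,10},{5,7,11}} := by
  obtain ⟨h₀, h₁, h₂, h₃⟩ : (0 : Fin 12) ∈ B₁ ∧ 1 ∈ B₁ ∧ 2 ∈ B₁ ∧ 3 ∈ B₁ := by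
    simpa [Finset.insert_subset_iff] using h₀₁₂₃
  have h₉ : (9 : Fin 12) ∈ B₂ := by
    simpa [hS₄.notMem (x := 9) hB₁ h₀, hS₃.notMem (x := 9) hB₃ h₇, hS₃.notMem (x := 9) hB₄ h₆]
      using hloc 9
  have h₈ : (8 : Fin 12) ∈ B₁ := by
    simpa [hS₃.notMem (x := 8) hB₂ h₉, hS₃.notMem (x := 8) hB₃ h₇, hS₃.notMem (x := 8) hB₄ h₆]
      using hloc 8
  have h₁₁ : (11 : Fin 12) ∈ B₃ := by
    simpa [hS₄.notMem (x := 11) hB₁ h₀, hS₄.notMem (x := 11) hB₂ h₉,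
      hS₄.notMem (x := 11) hB₄ h₁₀] using hloc 11
  refine hP.eq_of_forall_exists_subset (by decide) (by decide) ?_
  simp only [Finset.mem_insert, Finset.mem_singleton, forall_eq_or_imp, forall_eq]
  exact ⟨⟨B₁, hB₁, by simp [Finset.insert_subset_iff, *]⟩,
    ⟨B₂, hB₂, by simp [Finset.insert_subset_iff, *]⟩,
    ⟨B₄, hB₄, by simp [Finset.insert_subset_iff, *]⟩,
    ⟨B₃, hB₃, by simp [Finset.insert_subset_iff, *]⟩⟩

theorem eq_of_third_subset (hP : isPartitionInto P 4)
    (hB₁ : B₁ ∈ P) (hB₂ : B₂ ∈ P) (hB₃ : B₃ ∈ P) (hB₄ : B₄ ∈ P)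
    (hloc : ∀ x, x ∈ B₁ ∨ x ∈ B₂ ∨ x ∈ B₃ ∨ x ∈ B₄) (h₀₁₂₃ : {0,1,2,3} ⊆ B₁) (h₄ : 4 ∈ B₂)
    (h₅ : 5 ∈ B₃) (h₁₀ : 10 ∈ B₃) (h₆₇₈₉ : {6,7,8,9} ⊆ B₄) (hS₄ : Scattered P {9,10,11,0}) :
    P = {{0,1,2,3},{6,7,8,9},{4,11},{10,5}} := by
  have h₀ : (0 : Fin 12) ∈ B₁ := h₀₁₂₃ (by decide)
  have h₁₁ : (11 : Fin 12) ∈ B₂ := by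
    simpa [hS₄.notMem (x := 11) hB₁ h₀, hS₄.notMem (x := 11) hB₃ h₁₀,
      hS₄.notMem (x := 11) (y := 9) hB₄ (h₆₇₈₉ (by decide))] using hloc 11
  refine hP.eq_of_forall_exists_subset (by decide) (by decide) ?_
  simp only [Finset.mem_insert, Finset.mem_singleton, forall_eq_or_imp, forall_eq]
  exact ⟨⟨B₁, hB₁, h₀₁₂₃⟩, ⟨B₄, hB₄, h₆₇₈₉⟩,
    ⟨B₂, hB₂, by simp [Finset.insert_subset_iff, *]⟩,
    ⟨B₃, hB₃, by simp [Finset.insert_subset_iff, *]⟩⟩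

theorem eq_of_second_scattered (hP : isPartitionInto P 4) (hc : JCompat P I12) (hB₁ : B₁ ∈ P)
    (h₀₁₂₃ : {0,1,2,3} ⊆ B₁) (hS₂ : Scattered P {3,4,5,6}) :
    P = {{0,1,2,3},{6,7,8,9},{4,11},{10,5}} ∨ P = {{0,1,2,3,8},{4,9},{6,10},{5,7,11}} := by
  have h₀ : (0 : Fin 12) ∈ B₁ := h₀₁₂₃ (by decide)
  have h₁ : (1 : Fin 12) ∈ B₁ := h₀₁₂₃ (by decide)
  have h₃ : (3 : Fin 12) ∈ B₁ := h₀₁₂₃ (by decide)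
  obtain ⟨B₂, hB₂, h₄⟩ := Finset.exists_mem_of_biUnion_eq_univ hP.2.2.2 (4 : Fin 12)
  obtain ⟨B₃, hB₃, h₅⟩ := Finset.exists_mem_of_biUnion_eq_univ hP.2.2.2 (5 : Fin 12)
  obtain ⟨B₄, hB₄, h₆⟩ := Finset.exists_mem_of_biUnion_eq_univ hP.2.2.2 (6 : Fin 12)
  have hloc : ∀ x, x ∈ B₁ ∨ x ∈ B₂ ∨ x ∈ B₃ ∨ x ∈ B₄ := by
    have hcard : ({B₁, B₂, B₃, B₄} : Finset (Finset (Fin 12))).card = 4 :=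
      Finset.card_eq_four.mpr ⟨B₁, B₂, B₃, B₄, hS₂.ne_of_mem hB₁ h₃ h₄, hS₂.ne_of_mem hB₁ h₃ h₅,
        hS₂.ne_of_mem hB₁ h₃ h₆, hS₂.ne_of_mem hB₂ h₄ h₅, hS₂.ne_of_mem hB₂ h₄ h₆,
        hS₂.ne_of_mem hB₃ h₅ h₆, rfl⟩
    intro x
    simpa using
      hP.exists_mem_of_subset_of_card_le (by simp [Finset.insert_subset_iff, *]) hcard.ge x
  have hS₅ : Scattered P {1,4,7,10} :=
    hc.scattered_of_mem_of_notMem hP hB₁ h₁ (hS₂.notMem (x := 4) hB₁ h₃)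
  have hS₄ : Scattered P {9,10,11,0} :=
    hc.scattered_of_mem_of_notMem hP hB₁ h₀ (hS₅.notMem (x := 10) hB₁ h₁)
  have h₇ : (7 : Fin 12) ∈ B₃ ∨ 7 ∈ B₄ := by
    simpa [hS₅.notMem (x := 7) hB₁ h₁, hS₅.notMem (x := 7) hB₂ h₄] using hloc 7
  have h₁₀ : (10 : Fin 12) ∈ B₃ ∨ 10 ∈ B₄ := by
    simpa [hS₅.notMem (x := 10) hB₁ h₁, hS₅.notMem (x := 10) hB₂ h₄] using hloc 10
  rcases h₇ with h₇ | h₇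
  · have h₁₀ : (10 : Fin 12) ∈ B₄ := by simpa [hS₅.notMem (x := 10) hB₃ h₇] using h₁₀
    have hS₃ : Scattered P {6,7,8,9} :=
      hc.scattered_of_mem_of_notMem hP hB₃ h₇ (hS₂.notMem (x := 6) hB₃ h₅)
    exact Or.inr (eq_of_third_scattered hP hB₁ hB₂ hB₃ hB₄ hloc h₀₁₂₃ h₄ h₅ h₇ h₆ h₁₀ hS₃ hS₄)
  · have h₁₀ : (10 : Fin 12) ∈ B₃ := by simpa [hS₅.notMem (x := 10) hB₄ h₇] using h₁₀
    have h₆₇₈₉ : {6,7,8,9} ⊆ B₄ := hc.subset_of_mem_of_mem hP hB₄ h₆ h₇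
    exact Or.inl (eq_of_third_subset hP hB₁ hB₂ hB₃ hB₄ hloc h₀₁₂₃ h₄ h₅ h₁₀ h₆₇₈₉ hS₄)

end I12

theorem stmt7 (P : Finset (Finset (Fin 12)))
    (hP : isPartitionInto P 4) (hcompat : JCompat P I12)
    (hblock : ∃ B ∈ P, ({0,1,2,3} : Finset (Fin 12)) ⊆ B) :
    P = {{0,1,2,3},{6,7,8,9},{4,11},{10,5}} ∨
    P = {{0,1,2,3,8},{4,9},{6,10},{5,7,11}} := by
  obtain ⟨B₁, hB₁, h₀₁₂₃⟩ := hblock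
  rcases hcompat {3,4,5,6} (by decide) with ⟨B, hB, h₃₄₅₆⟩ | hS₂
  · obtain rfl : B = B₁ :=
      hP.eq_of_mem_of_mem hB hB₁ (x := 3) (h₃₄₅₆ (by decide)) (h₀₁₂₃ (by decide))
    have := hP.le_one_of_univ_subset hB
      (I12.univ_subset_of_first_two_subset hP hcompat hB h₀₁₂₃ h₃₄₅₆)
    omega
  · exact I12.eq_of_second_scattered hP hcompat hB₁ h₀₁₂₃ hS₂
end

section
/- Let Ω = {ω_1, …, ω_12} and let 𝓘 = { {ω_1, ω_2, ω_3, ω_4}, {ω_4, ω_5, ω_6, ω_7}, {ω_7, ω_8, ω_9, ω_10}, {ω_10, ω_11, ω_12, ω_1}, {ω_2, ω_5, ω_8, ω_11} }. If P is a partition of Ω into exactly 4 nonempty blocks satisfying the 𝒥-minimal compatibility condition with respect to 𝓘, and the set {ω_2, ω_5, ω_8, ω_11} is contained in a single block of P, then P is one of the three partitions: {{ω_2, ω_5, ω_8, ω_11}, {ω_1, ω_6, ω_9}, {ω_3, ω_7, ω_12}, {ω_4, ω_10}}; {{ω_2, ω_5, ω_8, ω_11}, {ω_1, ω_7}, {ω_3,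 ω_6, ω_10}, {ω_4, ω_9, ω_12}}; {{ω_2, ω_5, ω_8, ω_11}, {ω_1, ω_7}, {ω_3, ω_6, ω_9, ω_12}, {ω_4, ω_10}}. -/
/-! Colour every point by its block, so that each member of `I12` is monochromatic or rainbow.
Two points of equal colour in a member make it monochromatic. Each member of the cycle
`{0,1,2,3}, {3,4,5,6}, {6,7,8,9}, {9,10,11,0}` contains one of the spokes `1, 4, 7, 10`, and
consecutive members share a non-spoke point; so if a non-spoke point had the spokes' colour,
monochromaticity would spread around the cycle and leave a single colour. Hence the cycle members
are rainbow, `0, 1, 2, 3` carry the four colours, and the remaining points are properly coloured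
along the triangles `{3,5,6}, {6,8,9}, {9,11,0}`: choosing the colour of `6`, then of `8`,
leaves exactly three colourings. -/

open Finset Function

section Colouring

variable {Ω α : Type*}

def IsCompatibleColouring (κ : Ω → α) (I : Finset (Finset Ω)) : Prop :=
  ∀ S ∈ I, (∀ x ∈ S, ∀ y ∈ S, κ x = κ y) ∨ ∀ x ∈ S, ∀ y ∈ S, κ x = κ y → x = y

variable {κ : Ω → α} {I : Finset (Finset Ω)} {S : Finset Ω} {x y : Ω}

theorem IsCompatibleColouring.apply_eq_of_apply_eq (hκ : IsCompatibleColouring κ I)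
    (hS : S ∈ I) (hx : x ∈ S) (hy : y ∈ S) (hxy : x ≠ y) (hκxy : κ x = κ y) :
    ∀ z ∈ S, κ z = κ x :=
  (hκ S hS).elim (fun hmono z hz => hmono z hz x hx)
    fun hrainbow => absurd (hrainbow x hx y hy hκxy) hxy

theorem IsCompatibleColouring.apply_ne_of_apply_ne (hκ : IsCompatibleColouring κ I)
    (hS : S ∈ I) (hx : x ∈ S) (hy : y ∈ S) (hκxy : κ x ≠ κ y) :
    ∀ z ∈ S, ∀ w ∈ S, z ≠ w → κ z ≠ κ w :=
  (hκ S hS).elim (fun hmono => absurd (hmono x hx y hy) hκxy)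
    fun hrainbow z hz w hw hzw hκzw => hzw (hrainbow z hz w hw hκzw)

end Colouring

section Partition

variable {Ω : Type*} [Fintype Ω] [DecidableEq Ω]

def fibres {β : Type*} [DecidableEq β] (p : Ω → β) : Finset (Finset Ω) :=
  univ.image fun x => ({y | p y = p x} : Finset Ω)

theorem fibres_eq_of_apply_eq {β γ : Type*} [DecidableEq β] [DecidableEq γ] {κ : Ω → γ}
    {g : β → γ} (hg : Injective g) (p : Ω → β) (h : ∀ x, κ x = g (p x)) :
    fibres κ = fibres p := by
  simp only [fibres, h, hg.eq_iff]

def IsBlockMap (P : Finset (Finset Ω)) (κ : Ω → Finset Ω) : Prop :=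
  ∀ x, κ x ∈ P ∧ x ∈ κ x

variable {P : Finset (Finset Ω)} {r : ℕ} {κ : Ω → Finset Ω} {B : Finset Ω} {x : Ω}

theorem isPartitionInto.exists_isBlockMap (hP : isPartitionInto P r) :
    ∃ κ : Ω → Finset Ω, IsBlockMap P κ := by
  have hcover (x : Ω) : ∃ B ∈ P, x ∈ B := by
    simpa using (hP.2.2.2.symm ▸ mem_univ x : x ∈ P.biUnion id)
  choose κ hκP hκ using hcover
  exact ⟨κ, fun x => ⟨hκP x, hκ x⟩⟩

theorem isPartitionInto.mem_iff_eq (hP : isPartitionInto P r) (hκ : IsBlockMap P κ)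
    (hB : B ∈ P) : x ∈ B ↔ κ x = B := by
  refine ⟨fun hx => ?_, fun h => h ▸ (hκ x).2⟩
  by_contra hne
  exact disjoint_left.1 (hP.2.2.1 _ (hκ x).1 B hB hne) (hκ x).2 hx

theorem isPartitionInto.image_eq (hP : isPartitionInto P r) (hκ : IsBlockMap P κ) :
    univ.image κ = P := by
  ext B
  refine ⟨fun hB => ?_, fun hB => ?_⟩
  · obtain ⟨x, -, rfl⟩ := mem_image.1 hB
    exact (hκ x).1
  · obtain ⟨x, hx⟩ := hP.2.1 B hB
    exact mem_image.2 ⟨x, mem_univ x, (hP.mem_iff_eq hκ hB).1 hx⟩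

theorem isPartitionInto.eq_fibres (hP : isPartitionInto P r) (hκ : IsBlockMap P κ) :
    P = fibres κ := by
  rw [← hP.image_eq hκ, fibres]
  refine image_congr fun x _ => ?_
  ext y
  simp [hP.mem_iff_eq hκ (hκ x).1]

theorem JCompat.isCompatibleColouring {I : Finset (Finset Ω)} (h : JCompat P I)
    (hP : isPartitionInto P r) (hκ : IsBlockMap P κ) : IsCompatibleColouring κ I := by
  intro S hS
  rcases h S hS with ⟨B, hB, hSB⟩ | hrainbow
  · exact Or.inl fun x hx y hy =>
      ((hP.mem_iff_eq hκ hB).1 (hSB hx)).trans ((hP.mem_iff_eq hκ hB).1 (hSB hy)).symm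
  · exact Or.inr fun x hx y hy hxy =>
      hrainbow x hx y hy (κ x) (hκ x).1 (hκ x).2 (hxy ▸ (hκ y).2)

end Partition

def cycleEdge : Fin 4 → Finset (Fin 12) := ![{0,1,2,3}, {3,4,5,6}, {6,7,8,9}, {9,10,11,0}]

def spokes : Finset (Fin 12) := {1,4,7,10}

theorem cycleEdge_mem_I12 (i : Fin 4) : cycleEdge i ∈ I12 := by
  fin_cases i <;> decide

theorem exists_mem_cycleEdge (x : Fin 12) : ∃ i, x ∈ cycleEdge i := by
  fin_cases x <;> decide

theorem exists_spoke_mem_cycleEdge (i : Fin 4) : ∃ t ∈ cycleEdge i, t ∈ spokes := by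
  fin_cases i <;> decide

theorem exists_nonspoke_mem_cycleEdge_inter_succ (i : Fin 4) :
    ∃ v ∈ cycleEdge i, v ∈ cycleEdge (i + 1) ∧ v ∉ spokes := by
  fin_cases i <;> decide

section Cycle

variable {α : Type*} {κ : Fin 12 → α}

theorem IsCompatibleColouring.apply_cycleEdge_succ (hκ : IsCompatibleColouring κ I12)
    (hT : ∀ t ∈ spokes, κ t = κ 1) {i : Fin 4} (h : ∀ z ∈ cycleEdge i, κ z = κ 1) :
    ∀ z ∈ cycleEdge (i + 1), κ z = κ 1 := by
  obtain ⟨v, hvi, hv, hvT⟩ := exists_nonspoke_mem_cycleEdge_inter_succ i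
  obtain ⟨t, ht, htT⟩ := exists_spoke_mem_cycleEdge (i + 1)
  have hvt : v ≠ t := fun h => hvT (h ▸ htT)
  intro z hz
  rw [hκ.apply_eq_of_apply_eq (cycleEdge_mem_I12 _) hv ht hvt (by rw [h v hvi, hT t htT]) z hz,
    h v hvi]

theorem IsCompatibleColouring.apply_eq_of_forall_mem_cycleEdge
    (hκ : IsCompatibleColouring κ I12) (hT : ∀ t ∈ spokes, κ t = κ 1) {i : Fin 4}
    (h : ∀ z ∈ cycleEdge i, κ z = κ 1) (x : Fin 12) : κ x = κ 1 := by
  have hsucc {j : Fin 4} := hκ.apply_cycleEdge_succ hT (i := j)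
  have hreach : ∀ i j : Fin 4, j = i ∨ j = i + 1 ∨ j = i + 1 + 1 ∨ j = i + 1 + 1 + 1 := by
    decide
  obtain ⟨j, hx⟩ := exists_mem_cycleEdge x
  obtain rfl | rfl | rfl | rfl := hreach i j
  exacts [h x hx, hsucc h x hx, hsucc (hsucc h) x hx, hsucc (hsucc (hsucc h)) x hx]

variable [DecidableEq α]

theorem IsCompatibleColouring.apply_ne_of_notMem_spokes (hκ : IsCompatibleColouring κ I12)
    (hT : ∀ t ∈ spokes, κ t = κ 1) (hcard : 1 < #(univ.image κ)) {x : Fin 12}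
    (hx : x ∉ spokes) : κ x ≠ κ 1 := by
  intro hx1
  obtain ⟨i, hxi⟩ := exists_mem_cycleEdge x
  obtain ⟨t, ht, htT⟩ := exists_spoke_mem_cycleEdge i
  have hmono := hκ.apply_eq_of_apply_eq (cycleEdge_mem_I12 i) hxi ht (fun h => hx (h ▸ htT))
    (hx1.trans (hT t htT).symm)
  have hconst := hκ.apply_eq_of_forall_mem_cycleEdge hT fun z hz => (hmono z hz).trans hx1
  have hsingleton : univ.image κ ⊆ {κ 1} := by
    intro c hc
    obtain ⟨y, -, rfl⟩ := mem_image.1 hc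
    exact mem_singleton.2 (hconst y)
  exact (card_le_card hsingleton).not_gt (by simpa using hcard)

theorem IsCompatibleColouring.apply_ne_of_mem_cycleEdge (hκ : IsCompatibleColouring κ I12)
    (hT : ∀ t ∈ spokes, κ t = κ 1) (hcard : 1 < #(univ.image κ)) {x y : Fin 12} (hxy : x ≠ y)
    (hi : ∃ i, x ∈ cycleEdge i ∧ y ∈ cycleEdge i) : κ x ≠ κ y := by
  obtain ⟨i, hx, hy⟩ := hi
  obtain ⟨v, hv, -, hvT⟩ := exists_nonspoke_mem_cycleEdge_inter_succ i
  obtain ⟨t, ht, htT⟩ := exists_spoke_mem_cycleEdge i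
  exact hκ.apply_ne_of_apply_ne (cycleEdge_mem_I12 i) hv ht
    (by rw [hT t htT]; exact hκ.apply_ne_of_notMem_spokes hT hcard hvT) x hx y hy hxy

theorem IsCompatibleColouring.image_cycleEdge (hκ : IsCompatibleColouring κ I12)
    (hT : ∀ t ∈ spokes, κ t = κ 1) (hcard : #(univ.image κ) = 4) (i : Fin 4) :
    (cycleEdge i).image κ = univ.image κ := by
  refine eq_of_subset_of_card_le (image_subset_image (subset_univ _)) ?_
  rw [hcard, card_image_of_injOn fun x hx y hy hxy => by_contra fun hne =>
    hκ.apply_ne_of_mem_cycleEdge hT (by omega) hne ⟨i, hx, hy⟩ hxy]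
  fin_cases i <;> rfl

theorem IsCompatibleColouring.apply_eq_or_eq_or_eq_or_eq (hκ : IsCompatibleColouring κ I12)
    (hT : ∀ t ∈ spokes, κ t = κ 1) (hcard : #(univ.image κ) = 4) (x : Fin 12) :
    κ x = κ 0 ∨ κ x = κ 1 ∨ κ x = κ 2 ∨ κ x = κ 3 := by
  have hx := mem_image_of_mem κ (mem_univ x)
  rw [← hκ.image_cycleEdge hT hcard 0] at hx
  simpa [cycleEdge] using hx

theorem IsCompatibleColouring.colour_cases (hκ : IsCompatibleColouring κ I12)
    (hT : ∀ t ∈ spokes, κ t = κ 1) (hcard : #(univ.image κ) = 4) :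
    (κ 5 = κ 0 ∧ κ 6 = κ 2 ∧ κ 8 = κ 0 ∧ κ 9 = κ 3 ∧ κ 11 = κ 2) ∨
    (κ 5 = κ 2 ∧ κ 6 = κ 0 ∧ κ 8 = κ 3 ∧ κ 9 = κ 2 ∧ κ 11 = κ 3) ∨
    (κ 5 = κ 2 ∧ κ 6 = κ 0 ∧ κ 8 = κ 2 ∧ κ 9 = κ 3 ∧ κ 11 = κ 2) := by
  have hcard' : 1 < #(univ.image κ) := by omega
  have hcol := hκ.apply_eq_or_eq_or_eq_or_eq hT hcard
  have hspoke {x : Fin 12} (hx : x ∉ spokes) := hκ.apply_ne_of_notMem_spokes hT hcard' hx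
  have hrainbow {x y : Fin 12} := hκ.apply_ne_of_mem_cycleEdge hT hcard' (x := x) (y := y)
  have ne51 := hspoke (x := 5) (by decide)
  have ne61 := hspoke (x := 6) (by decide)
  have ne81 := hspoke (x := 8) (by decide)
  have ne91 := hspoke (x := 9) (by decide)
  have ne111 := hspoke (x := 11) (by decide)
  have ne53 := hrainbow (x := 5) (y := 3) (by decide) (by decide)
  have ne56 := hrainbow (x := 5) (y := 6) (by decide) (by decide)
  have ne63 := hrainbow (x := 6) (y := 3) (by decide) (by decide)
  have ne86 := hrainbow (x := 8) (y := 6) (by decide) (by decide)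
  have ne96 := hrainbow (x := 9) (y := 6) (by decide) (by decide)
  have ne98 := hrainbow (x := 9) (y := 8) (by decide) (by decide)
  have ne90 := hrainbow (x := 9) (y := 0) (by decide) (by decide)
  have ne110 := hrainbow (x := 11) (y := 0) (by decide) (by decide)
  have ne119 := hrainbow (x := 11) (y := 9) (by decide) (by decide)
  obtain h6 | h6 : κ 6 = κ 0 ∨ κ 6 = κ 2 := by grind
  · have h5 : κ 5 = κ 2 := by grind
    obtain h8 | h8 : κ 8 = κ 2 ∨ κ 8 = κ 3 := by grind
    · have h9 : κ 9 = κ 3 := by grind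
      have h11 : κ 11 = κ 2 := by grind
      exact Or.inr (Or.inr ⟨h5, h6, h8, h9, h11⟩)
    · have h9 : κ 9 = κ 2 := by grind
      have h11 : κ 11 = κ 3 := by grind
      exact Or.inr (Or.inl ⟨h5, h6, h8, h9, h11⟩)
  · have h5 : κ 5 = κ 0 := by grind
    have h9 : κ 9 = κ 3 := by grind
    have h8 : κ 8 = κ 0 := by grind
    have h11 : κ 11 = κ 2 := by grind
    exact Or.inl ⟨h5, h6, h8, h9, h11⟩

theorem IsCompatibleColouring.fibres_eq (hκ : IsCompatibleColouring κ I12)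
    (hT : ∀ t ∈ spokes, κ t = κ 1) (hcard : #(univ.image κ) = 4) :
    fibres κ = {{1,4,7,10}, {0,5,8}, {2,6,11}, {3,9}} ∨
    fibres κ = {{1,4,7,10}, {0,6}, {2,5,9}, {3,8,11}} ∨
    fibres κ = {{1,4,7,10}, {0,6}, {2,5,8,11}, {3,9}} := by
  -- colour `i` of the colourings `![…]` below is the colour of the point `i` of `{0,1,2,3}`
  have hg : Injective ![κ 0, κ 1, κ 2, κ 3] := by
    intro i j hij
    by_contra hne
    fin_cases i <;> fin_cases j <;> first
      | exact hne rfl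
      | exact hκ.apply_ne_of_mem_cycleEdge hT (by omega) (by decide) ⟨0, by decide⟩ hij
  have eq41 := hT 4 (by decide)
  have eq71 := hT 7 (by decide)
  have eq101 := hT 10 (by decide)
  rcases hκ.colour_cases hT hcard with h | h | h
  · refine Or.inl ?_
    rw [fibres_eq_of_apply_eq hg ![0,1,2,3,1,0,2,1,0,3,1,2] fun x => by fin_cases x <;> simp [*]]
    decide
  · refine Or.inr (Or.inl ?_)
    rw [fibres_eq_of_apply_eq hg ![0,1,2,3,1,2,0,1,3,2,1,3] fun x => by fin_cases x <;> simp [*]]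
    decide
  · refine Or.inr (Or.inr ?_)
    rw [fibres_eq_of_apply_eq hg ![0,1,2,3,1,2,0,1,2,3,1,2] fun x => by fin_cases x <;> simp [*]]
    decide

end Cycle

theorem stmt8 (P : Finset (Finset (Fin 12)))
    (hP : isPartitionInto P 4) (hcompat : JCompat P I12)
    (hblock : ∃ B ∈ P, ({1,4,7,10} : Finset (Fin 12)) ⊆ B) :
    P = {{1,4,7,10},{0,5,8},{2,6,11},{3,9}} ∨
    P = {{1,4,7,10},{0,6},{2,5,9},{3,8,11}} ∨
    P = {{1,4,7,10},{0,6},{2,5,8,11},{3,9}} := by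
  obtain ⟨κ, hκ⟩ := hP.exists_isBlockMap
  obtain ⟨B, hB, hspokes⟩ := hblock
  have hT (t : Fin 12) (ht : t ∈ spokes) : κ t = κ 1 :=
    ((hP.mem_iff_eq hκ hB).1 (hspokes ht)).trans
      ((hP.mem_iff_eq hκ hB).1 (hspokes (by decide))).symm
  have hcard : #(univ.image κ) = 4 := by rw [hP.image_eq hκ, hP.1]
  rw [hP.eq_fibres hκ]
  exact (hcompat.isCompatibleColouring hP hκ).fibres_eq hT hcard
end

section
/- Let Ω = {ω_1, …, ω_12} and let 𝓑 consist of the four partitions of Ω: {{ω_1, ω_2, ω_3, ω_4}, {ω_7, ω_8, ω_9, ω_10}, {ω_5, ω_12}, {ω_11, ω_6}}; {{ω_4, ω_5, ω_6, ω_7}, {ω_10, ω_11, ω_12, ω_1}, {ω_2, ω_9}, {ω_3, ω_8}}; {{ω_1, ω_2, ω_3, ω_4, ω_9}, {ω_5, ω_10}, {ω_7, ω_11}, {ω_6, ω_8, ω_12}}; {{ω_2, ω_5, ω_8, ω_11}, {ω_1, ω_6, ω_9}, {ω_3, ω_7, ω_12}, {ω_4, ω_10}}. Then the incidence matrix of the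 collection 𝓔 of all blocks of all partitions in 𝓑 has rank 12 over ℂ. -/
namespace Stmt10Aux

def E : Finset (Finset (Fin 12)) :=
  ((({{0,1,2,3},{6,7,8,9},{4,11},{10,5}} : Finset (Finset (Fin 12))) ∪
    {{3,4,5,6},{9,10,11,0},{1,8},{2,7}}) ∪
   (({{0,1,2,3,8},{4,9},{6,10},{5,7,11}} : Finset (Finset (Fin 12))) ∪
    {{1,4,7,10},{0,5,8},{2,6,11},{3,9}}))

def g : Fin 12 → {B // B ∈ E} :=
  ![⟨{0,1,2,3}, by decide⟩, ⟨{6,7,8,9}, by decide⟩, ⟨{4,11}, by decide⟩,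
    ⟨{10,5}, by decide⟩, ⟨{3,4,5,6}, by decide⟩, ⟨{9,10,11,0}, by decide⟩,
    ⟨{1,8}, by decide⟩, ⟨{0,1,2,3,8}, by decide⟩, ⟨{4,9}, by decide⟩,
    ⟨{6,10}, by decide⟩, ⟨{1,4,7,10}, by decide⟩, ⟨{0,5,8}, by decide⟩]

def Sz : Matrix (Fin 12) (Fin 12) ℤ := !![
  1, 0, 0, 0, 0, 1, 0, 1, 0, 0, 0, 1;
  1, 0, 0, 0, 0, 0, 1, 1, 0, 0, 1, 0;
  1, 0, 0, 0, 0, 0, 0, 1, 0, 0, 0, 0;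
  1, 0, 0, 0, 1, 0, 0, 1, 0, 0, 0, 0;
  0, 0, 1, 0, 1, 0, 0, 0, 1, 0, 1, 0;
  0, 0, 0, 1, 1, 0, 0, 0, 0, 0, 0, 1;
  0, 1, 0, 0, 1, 0, 0, 0, 0, 1, 0, 0;
  0, 1, 0, 0, 0, 0, 0, 0, 0, 0, 1, 0;
  0, 1, 0, 0, 0, 0, 1, 1, 0, 0, 0, 1;
  0, 1, 0, 0, 0, 1, 0, 0, 1, 0, 0, 0;
  0, 0, 0, 1, 0, 1, 0, 0, 0, 1, 1, 0;
  0, 0, 1, 0, 0, 1, 0, 0, 0, 0, 0, 0]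

def Cz : Matrix (Fin 12) (Fin 12) ℤ := !![
  -2, -8, -8, 10, 2, -6, -6, 0, 8, -2, 6, -2;
  2, 0, -4, 2, 2, -2, -2, -4, 0, -2, 2, -2;
  2, 0, -8, 6, -2, -2, -2, 0, 0, 2, 2, -6;
  6, 0, -8, 2, 2, -6, 2, 0, 0, -2, -2, -2;
  0, 0, 8, -8, 0, 0, 0, 0, 0, 0, 0, 0;
  -2, 0, 8, -6, 2, 2, 2, 0, 0, -2, -2, -2;
  2, -8, 4, 2, 2, -2, -2, 4, 0, -2, 2, -2;
  2, 8, 0, -10, -2, 6, 6, 0, -8, 2, -6, 2;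
  0, 0, -4, 4, -4, 0, 0, 4, 0, -4, 0, 4;
  -2, 0, -4, 6, -2, 2, -6, 4, 0, 2, -2, 2;
  -2, 0, 4, -2, -2, 2, 2, -4, 0, 2, -2, 2;
  -6, 0, 0, 6, -2, -2, -2, 0, 0, 2, 2, 2]

lemma hSC : Sz * Cz = (-8 : ℤ) • 1 := by decide

lemma hkey : ∀ i j : Fin 12, Sz i j = if (i : Fin 12) ∈ (g j).1 then 1 else 0 := by
  have : ∀ p : Fin 12 × Fin 12, Sz p.1 p.2 = if (p.1 : Fin 12) ∈ (g p.2).1 then 1 else 0 := by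
    decide +kernel
  exact fun i j => this (i, j)

lemma hsub : (incidenceMatrix ℂ E).submatrix id g = Sz.map (Int.cast : ℤ → ℂ) := by
  ext i j
  simp only [Matrix.submatrix_apply, Matrix.map_apply, incidenceMatrix, hkey i j, id]
  split_ifs <;> simp

lemma hSCc : Sz.map (Int.cast : ℤ → ℂ) * Cz.map (Int.cast : ℤ → ℂ)
    = (-8 : ℂ) • (1 : Matrix (Fin 12) (Fin 12) ℂ) := by
  ext i j
  have h := congrFun (congrFun hSC i) j
  simp only [Matrix.mul_apply, Matrix.map_apply, Matrix.smul_apply, Matrix.one_apply,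
    smul_eq_mul] at h ⊢
  split_ifs at h ⊢ <;> exact_mod_cast h

lemma hunit : IsUnit ((incidenceMatrix ℂ E).submatrix id g) := by
  apply (Matrix.isUnit_iff_isUnit_det _).mpr
  apply Matrix.isUnit_det_of_right_inverse
    (B := (-8 : ℂ)⁻¹ • Cz.map (Int.cast : ℤ → ℂ))
  rw [hsub, Matrix.mul_smul, hSCc, smul_smul]
  norm_num

end Stmt10Aux

/- Here `Ω = Fin 12`, with `ω_i` corresponding to `i - 1 : Fin 12`.
`𝓔` is the collection of all blocks of the four given partitions. -/
theorem stmt10 :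
    (incidenceMatrix ℂ
      ((({{0,1,2,3},{6,7,8,9},{4,11},{10,5}} : Finset (Finset (Fin 12))) ∪
        {{3,4,5,6},{9,10,11,0},{1,8},{2,7}}) ∪
       (({{0,1,2,3,8},{4,9},{6,10},{5,7,11}} : Finset (Finset (Fin 12))) ∪
        {{1,4,7,10},{0,5,8},{2,6,11},{3,9}}))).rank = 12 := by
  open Stmt10Aux in
  have key : (incidenceMatrix ℂ Stmt10Aux.E).rank = 12 := by
    set M := incidenceMatrix ℂ Stmt10Aux.E with hM
    have hle : M.rank ≤ 12 := by
      simpa using M.rank_le_card_height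
    have hrankS : (M.submatrix id Stmt10Aux.g).rank = 12 := by
      simpa using Matrix.rank_of_isUnit _ Stmt10Aux.hunit
    have hge : (M.submatrix id Stmt10Aux.g).rank ≤ M.rank := by
      rw [Matrix.rank_eq_finrank_span_cols, Matrix.rank_eq_finrank_span_cols]
      apply Submodule.finrank_mono
      apply Submodule.span_mono
      rintro x ⟨j, rfl⟩
      exact ⟨Stmt10Aux.g j, rfl⟩
    omega
  exact key
end

section
/- Let Ω = {ω_1, …, ω_12} and let 𝓑 consist of the four partitions of Ω: {{ω_1, ω_2, ω_3, ω_4, ω_9}, {ω_5, ω_10}, {ω_7, ω_11}, {ω_6, ω_8, ω_12}}; {{ω_4, ω_5, ω_6, ω_7, ω_12}, {ω_1, ω_8}, {ω_9, ω_11, ω_3}, {ω_2, ω_10}}; {{ω_7, ω_8, ω_9, ω_10, ω_3}, {ω_4, ω_11}, {ω_2, ω_6, ω_12}, {ω_1, ω_5}}; {{ω_10, ω_11, ω_12, ω_1, ω_6}, {ω_2, ω_7}, {ω_3, ω_5, ω_9}, {ω_4, ω_8}}. Then the incidence matrix of the collection 𝓔 of all blocks of all partitions in 𝓑 has rank strictly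 less than 12 over ℂ. -/
theorem Matrix.rank_lt_card_height_of_row_eq {m n R : Type*} [Fintype m] [Fintype n] [Field R]
    (A : Matrix m n R) {i j : m} (hij : i ≠ j) (h : A i = A j) :
    A.rank < Fintype.card m := by
  refine A.rank_le_card_height.lt_of_ne fun hrank => hij ?_
  have hli : LinearIndependent R A.row := by
    rw [linearIndependent_iff_card_eq_finrank_span, Set.finrank, ← A.rank_eq_finrank_span_row,
      hrank]
  exact hli.injective h

theorem incidenceMatrix_rank_lt_card (F : Type*) [Field F] {Ω : Type*} [Fintype Ω]
    [DecidableEq Ω] (E : Finset (Finset Ω)) {ω ω' : Ω} (hne : ω ≠ ω')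
    (h : ∀ B ∈ E, ω ∈ B ↔ ω' ∈ B) :
    (incidenceMatrix F E).rank < Fintype.card Ω :=
  Matrix.rank_lt_card_height_of_row_eq _ hne <| funext fun B => by
    simp only [incidenceMatrix, h B.1 B.2]

theorem stmt11 :
    (incidenceMatrix ℂ
      ((({{0,1,2,3,8},{4,9},{6,10},{5,7,11}} : Finset (Finset (Fin 12))) ∪
        {{3,4,5,6,11},{0,7},{8,10,2},{1,9}}) ∪
       (({{6,7,8,9,2},{3,10},{1,5,11},{0,4}} : Finset (Finset (Fin 12))) ∪
        {{9,10,11,0,5},{1,6},{2,4,8},{3,7}}))).rank < 12 :=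
  incidenceMatrix_rank_lt_card ℂ _ (ω := 2) (ω' := 8) (by decide) (by simp)
end
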